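/- arXiv:1309.5727 — 8 statements merged into one kernel-verified Lean document; each statement's English description precedes it below -/
import Mathlib

section
/- Let Y be a real R×R×2 array whose two frontal R×R slices Y₁ and Y₂ are both nonsingular. If the matrix Y₂Y₁⁻¹ is diagonalizable over the reals (i.e., there exist a nonsingular real matrix P and a real diagonal matrix D with Y₂Y₁⁻¹ = P·D·P⁻¹), then the tensor rank of Y equals R. -/
open Matrix
open scoped BigOperators

/-- The tensor rank of a real `I × J × K` array: the smallest `R` such that the array
is a sum of `R` rank-1 (outer product) arrays. -/
noncomputable def tensorRank {I J K : ℕ} (Y : Fin I → Fin J → Fin K → ℝ) : ℕ :=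
  sInf {R : ℕ | ∃ (a : Fin R → Fin I → ℝ) (b : Fin R → Fin J → ℝ) (c : Fin R → Fin K → ℝ),
    ∀ i j k, Y i j k = ∑ r, a r i * b r j * c r k}

theorem stmt0 {R : ℕ} (Y : Fin R → Fin R → Fin 2 → ℝ)
    (Y1 Y2 : Matrix (Fin R) (Fin R) ℝ)
    (hY1 : ∀ i j, Y1 i j = Y i j 0) (hY2 : ∀ i j, Y2 i j = Y i j 1)
    (h1 : IsUnit Y1.det) (h2 : IsUnit Y2.det)
    (hdiag : ∃ (P D : Matrix (Fin R) (Fin R) ℝ),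
      IsUnit P.det ∧ D.IsDiag ∧ Y2 * Y1⁻¹ = P * D * P⁻¹) :
    tensorRank Y = R := by
  obtain ⟨P, D, hP, hD, heq⟩ := hdiag
  set S := {R' : ℕ | ∃ (a : Fin R' → Fin R → ℝ) (b : Fin R' → Fin R → ℝ)
      (c : Fin R' → Fin 2 → ℝ), ∀ i j k, Y i j k = ∑ r, a r i * b r j * c r k} with hS
  -- membership: R ∈ S
  have hmem : R ∈ S := by
    set Q : Matrix (Fin R) (Fin R) ℝ := P⁻¹ * Y1 with hQ
    have hPQ : P * Q = Y1 := by
      rw [hQ, ← Matrix.mul_assoc, Matrix.mul_nonsing_inv P hP, Matrix.one_mul]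
    have hPDQ : P * D * Q = Y2 := by
      have : Y2 * Y1⁻¹ * Y1 = Y2 := by
        rw [Matrix.mul_assoc, Matrix.nonsing_inv_mul Y1 h1, Matrix.mul_one]
      calc P * D * Q = P * D * (P⁻¹ * Y1) := rfl
        _ = (P * D * P⁻¹) * Y1 := by rw [Matrix.mul_assoc (P * D)]
        _ = (Y2 * Y1⁻¹) * Y1 := by rw [heq]
        _ = Y2 := this
    have hDdiag : Matrix.diagonal D.diag = D := hD.diagonal_diag
    refine ⟨fun r i => P i r, fun r j => Q r j, fun r k => if k = 0 then 1 else D r r, ?_⟩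
    intro i j k
    match k with
    | 0 =>
      simp only [if_pos rfl, mul_one]
      rw [← hY1 i j, ← hPQ, Matrix.mul_apply]
      simp
    | 1 =>
      have h10 : (1 : Fin 2) ≠ 0 := by decide
      simp only [if_neg h10]
      rw [← hY2 i j, ← hPDQ, Matrix.mul_apply]
      apply Finset.sum_congr rfl
      intro r _
      rw [← hDdiag, Matrix.mul_diagonal]
      simp [Matrix.diag]
      ring
  -- lower bound: every element of S is ≥ R
  have hlb : ∀ n ∈ S, R ≤ n := by
    rintro n ⟨a, b, c, habc⟩
    set A : Matrix (Fin R) (Fin n) ℝ := fun i r => a r i * c r 0 with hA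
    set B : Matrix (Fin n) (Fin R) ℝ := fun r j => b r j with hB
    have hY1AB : Y1 = A * B := by
      ext i j
      rw [hY1 i j, habc i j 0, Matrix.mul_apply]
      apply Finset.sum_congr rfl
      intro r _
      simp [hA, hB]; ring
    have hrank : Y1.rank = R := by
      rw [Matrix.rank_of_isUnit Y1 ((Matrix.isUnit_iff_isUnit_det Y1).mpr h1)]
      simp
    calc R = Y1.rank := hrank.symm
      _ = (A * B).rank := by rw [hY1AB]
      _ ≤ A.rank := Matrix.rank_mul_le_left A B
      _ ≤ Fintype.card (Fin n) := A.rank_le_card_width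
      _ = n := Fintype.card_fin n
  exact le_antisymm (Nat.sInf_le hmem) (le_csInf ⟨R, hmem⟩ hlb)
end

section
/- Let Y be a real R×R×2 array whose two frontal R×R slices Y₁ and Y₂ are both nonsingular. If all eigenvalues of the matrix Y₂Y₁⁻¹ are real (its characteristic polynomial splits over ℝ) but Y₂Y₁⁻¹ is not diagonalizable over the reals, then the tensor rank of Y is at least R+1. -/
open Matrix
open scoped BigOperators

/-!
A decomposition `Y = ∑_{r < R} a_r ∘ b_r ∘ c_r` with `R` terms says that the slices
factor simultaneously as `Y₁ = A D₁ B` and `Y₂ = A D₂ B` with `A, B` square of size `R` and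
`D₁, D₂` diagonal. Invertibility of `Y₁` forces `A`, `B`, `D₁` to be invertible, and then
`Y₂ Y₁⁻¹ = A (D₂ D₁⁻¹) A⁻¹` is diagonalizable. Decompositions with fewer terms are padded
with zero terms.
-/

section RankDecomposition

variable {I J K : ℕ}

def HasRankDecomp (Y : Fin I → Fin J → Fin K → ℝ) (n : ℕ) : Prop :=
  ∃ (a : Fin n → Fin I → ℝ) (b : Fin n → Fin J → ℝ) (c : Fin n → Fin K → ℝ),
    ∀ i j k, Y i j k = ∑ r, a r i * b r j * c r k

/-- One term `e_i ∘ e_j ∘ Y i j ·` per pair `(i, j)`. -/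
theorem hasRankDecomp_mul (Y : Fin I → Fin J → Fin K → ℝ) : HasRankDecomp Y (I * J) := by
  classical
  let e := (finProdFinEquiv (m := I) (n := J)).symm
  refine ⟨fun r i => if (e r).1 = i then 1 else 0, fun r j => if (e r).2 = j then 1 else 0,
    fun r k => Y (e r).1 (e r).2 k, fun i j k => ?_⟩
  rw [← e.symm.sum_comp]
  simp [e, Fintype.sum_prod_type, ite_mul]

theorem HasRankDecomp.mono {Y : Fin I → Fin J → Fin K → ℝ} {m n : ℕ}
    (h : HasRankDecomp Y m) (hmn : m ≤ n) : HasRankDecomp Y n := by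
  obtain ⟨k, rfl⟩ := Nat.exists_eq_add_of_le hmn
  obtain ⟨a, b, c, hY⟩ := h
  refine ⟨Fin.append a 0, Fin.append b 0, Fin.append c 0, fun i j k => ?_⟩
  simp [Fin.sum_univ_add, hY]

theorem hasRankDecomp_tensorRank (Y : Fin I → Fin J → Fin K → ℝ) :
    HasRankDecomp Y (tensorRank Y) :=
  Nat.sInf_mem (s := {n | HasRankDecomp Y n}) ⟨_, hasRankDecomp_mul Y⟩

theorem hasRankDecomp_of_tensorRank_le {Y : Fin I → Fin J → Fin K → ℝ} {n : ℕ}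
    (h : tensorRank Y ≤ n) : HasRankDecomp Y n :=
  (hasRankDecomp_tensorRank Y).mono h

theorem slice_eq_mul_diagonal_mul {n : ℕ} (Y : Fin I → Fin J → Fin K → ℝ)
    (a : Fin n → Fin I → ℝ) (b : Fin n → Fin J → ℝ) (c : Fin n → Fin K → ℝ)
    (hY : ∀ i j k, Y i j k = ∑ r, a r i * b r j * c r k) (k : Fin K) :
    Matrix.of (fun i j => Y i j k) = (Matrix.of a)ᵀ * diagonal (fun r => c r k) * Matrix.of b := by
  ext i j
  rw [Matrix.mul_apply]
  simp only [hY, mul_diagonal, transpose_apply, of_apply, mul_right_comm]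

end RankDecomposition

theorem exists_isDiag_conj_of_eq_mul_diagonal_mul {n 𝕜 : Type*} [Fintype n] [DecidableEq n]
    [Field 𝕜] {M₁ M₂ A B : Matrix n n 𝕜} {d₁ d₂ : n → 𝕜}
    (hM₁ : M₁ = A * diagonal d₁ * B) (hM₂ : M₂ = A * diagonal d₂ * B) (h : IsUnit M₁.det) :
    ∃ P D : Matrix n n 𝕜, IsUnit P.det ∧ D.IsDiag ∧ M₂ * M₁⁻¹ = P * D * P⁻¹ := by
  rw [hM₁, det_mul, det_mul, IsUnit.mul_iff, IsUnit.mul_iff] at h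
  obtain ⟨⟨hA, -⟩, hB⟩ := h
  refine ⟨A, diagonal d₂ * (diagonal d₁)⁻¹, hA, ?_, ?_⟩
  · rw [inv_diagonal, diagonal_mul_diagonal]
    exact isDiag_diagonal _
  · rw [hM₁, hM₂, Matrix.mul_inv_rev, Matrix.mul_inv_rev]
    simp only [Matrix.mul_assoc, mul_nonsing_inv_cancel_left _ _ hB]

theorem stmt1_general {R : ℕ} (Y : Fin R → Fin R → Fin 2 → ℝ)
    (Y1 Y2 : Matrix (Fin R) (Fin R) ℝ)
    (hY1 : ∀ i j, Y1 i j = Y i j 0) (hY2 : ∀ i j, Y2 i j = Y i j 1)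
    (h1 : IsUnit Y1.det)
    (hnondiag : ¬ ∃ (P D : Matrix (Fin R) (Fin R) ℝ),
      IsUnit P.det ∧ D.IsDiag ∧ Y2 * Y1⁻¹ = P * D * P⁻¹) :
    R + 1 ≤ tensorRank Y := by
  by_contra! hrank
  obtain ⟨a, b, c, hY⟩ := hasRankDecomp_of_tensorRank_le (Nat.lt_succ_iff.mp hrank)
  have hY1' : Y1 = Matrix.of fun i j => Y i j 0 := Matrix.ext hY1
  have hY2' : Y2 = Matrix.of fun i j => Y i j 1 := Matrix.ext hY2
  rw [slice_eq_mul_diagonal_mul Y a b c hY] at hY1' hY2'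
  exact hnondiag (exists_isDiag_conj_of_eq_mul_diagonal_mul hY1' hY2' h1)

theorem stmt1 {R : ℕ} (Y : Fin R → Fin R → Fin 2 → ℝ)
    (Y1 Y2 : Matrix (Fin R) (Fin R) ℝ)
    (hY1 : ∀ i j, Y1 i j = Y i j 0) (hY2 : ∀ i j, Y2 i j = Y i j 1)
    (h1 : IsUnit Y1.det) (h2 : IsUnit Y2.det)
    (hreal : ((Y2 * Y1⁻¹).charpoly).Splits)
    (hnondiag : ¬ ∃ (P D : Matrix (Fin R) (Fin R) ℝ),
      IsUnit P.det ∧ D.IsDiag ∧ Y2 * Y1⁻¹ = P * D * P⁻¹) :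
    R + 1 ≤ tensorRank Y :=
  stmt1_general Y Y1 Y2 hY1 hY2 h1 hnondiag
end

section
/- Let Y be a real R×R×2 array whose two frontal R×R slices Y₁ and Y₂ are both nonsingular. If the matrix Y₂Y₁⁻¹, viewed as a complex matrix, has at least one non-real eigenvalue (equivalently, at least one pair of complex-conjugate eigenvalues), then the tensor rank of Y is at least R+1. -/
open Matrix
open scoped BigOperators

section Aux
open Polynomial

lemma charpoly_conj_aux {n : ℕ} (A M : Matrix (Fin n) (Fin n) ℝ) (hA : IsUnit A.det) :
    (A * M * A⁻¹).charpoly = M.charpoly := by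
  have hinv : A * A⁻¹ = 1 := Matrix.mul_nonsing_inv A hA
  have hmapinv : A.map (C : ℝ →+* ℝ[X]) * A⁻¹.map (C : ℝ →+* ℝ[X]) = 1 := by
    rw [← Matrix.map_mul, hinv, Matrix.map_one _ (map_zero C) (map_one C)]
  have hsc : (Matrix.scalar (Fin n) (X : ℝ[X])) = (X : ℝ[X]) • (1 : Matrix (Fin n) (Fin n) ℝ[X]) := by
    simp [Matrix.scalar_apply, Matrix.smul_one_eq_diagonal]
  have key : charmatrix (A * M * A⁻¹) = A.map C * charmatrix M * A⁻¹.map C := by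
    rw [charmatrix, charmatrix, Matrix.mul_sub, Matrix.sub_mul]
    congr 1
    · rw [hsc, Matrix.mul_smul, Matrix.smul_mul, mul_one, hmapinv]
    · simp only [RingHom.mapMatrix_apply, ← Matrix.map_mul]
  rw [Matrix.charpoly, Matrix.charpoly, key, det_mul, det_mul]
  have hinv' : A⁻¹ * A = 1 := Matrix.nonsing_inv_mul A hA
  have hmapinv' : A⁻¹.map (C : ℝ →+* ℝ[X]) * A.map (C : ℝ →+* ℝ[X]) = 1 := by
    rw [← Matrix.map_mul, hinv', Matrix.map_one _ (map_zero C) (map_one C)]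
  rw [mul_comm, ← mul_assoc, ← det_mul, hmapinv']
  simp

lemma charpoly_diag {n : ℕ} (d : Fin n → ℝ) :
    (Matrix.diagonal d).charpoly = ∏ i, (X - C (d i)) := by
  rw [Matrix.charpoly_of_upperTriangular _ (Matrix.blockTriangular_diagonal d)]
  simp


lemma exists_full_decomp {I J K : ℕ} (Y : Fin I → Fin J → Fin K → ℝ) :
    ∃ (a : Fin (I*(J*K)) → Fin I → ℝ) (b : Fin (I*(J*K)) → Fin J → ℝ)
      (c : Fin (I*(J*K)) → Fin K → ℝ),
      ∀ i j k, Y i j k = ∑ r, a r i * b r j * c r k := by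
  let e : Fin I × Fin (J*K) ≃ Fin (I*(J*K)) := finProdFinEquiv
  let f : Fin J × Fin K ≃ Fin (J*K) := finProdFinEquiv
  refine ⟨fun r i => if i = (e.symm r).1 then 1 else 0,
    fun r j => if j = (f.symm (e.symm r).2).1 then 1 else 0,
    fun r k => if k = (f.symm (e.symm r).2).2 then
      Y (e.symm r).1 (f.symm (e.symm r).2).1 (f.symm (e.symm r).2).2 else 0, ?_⟩
  intro i j k
  rw [Finset.sum_eq_single (e (i, f (j, k)))]
  · simp
  · intro r _ hr
    have h : e.symm r ≠ (i, f (j, k)) := by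
      intro h; apply hr; rw [← h]; simp
    by_cases h1 : (e.symm r).1 = i
    · have h2 : (e.symm r).2 ≠ f (j, k) := by
        intro h2; exact h (Prod.ext h1 h2)
      have h3 : f.symm (e.symm r).2 ≠ (j, k) := by
        intro h3; apply h2; rw [← h3]; simp
      by_cases h4 : (f.symm (e.symm r).2).1 = j
      · have h5 : (f.symm (e.symm r).2).2 ≠ k := by
          intro h5; exact h3 (Prod.ext h4 h5)
        simp [Ne.symm h5]
      · simp [Ne.symm h4]
    · simp [Ne.symm h1]
  · intro h; exact absurd (Finset.mem_univ _) h

lemma pad_decomp {I J K n m : ℕ} (h : n ≤ m) (Y : Fin I → Fin J → Fin K → ℝ)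
    (a : Fin n → Fin I → ℝ) (b : Fin n → Fin J → ℝ) (c : Fin n → Fin K → ℝ)
    (hd : ∀ i j k, Y i j k = ∑ r, a r i * b r j * c r k) :
    ∃ (a' : Fin m → Fin I → ℝ) (b' : Fin m → Fin J → ℝ) (c' : Fin m → Fin K → ℝ),
      ∀ i j k, Y i j k = ∑ r, a' r i * b' r j * c' r k := by
  refine ⟨fun r => if h' : (r : ℕ) < n then a ⟨r, h'⟩ else 0,
    fun r => if h' : (r : ℕ) < n then b ⟨r, h'⟩ else 0,
    fun r => if h' : (r : ℕ) < n then c ⟨r, h'⟩ else 0, ?_⟩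
  intro i j k
  rw [hd]
  set g : ℕ → ℝ := fun r => if h' : r < n then a ⟨r, h'⟩ i * b ⟨r, h'⟩ j * c ⟨r, h'⟩ k else 0
    with hg
  have e1 : ∑ r : Fin n, a r i * b r j * c r k = ∑ r ∈ Finset.range n, g r := by
    rw [← Fin.sum_univ_eq_sum_range]
    refine Finset.sum_congr rfl fun r _ => ?_
    simp [hg, r.2]
  have e2 : (∑ r : Fin m, (if h' : (r:ℕ) < n then a ⟨r, h'⟩ else 0) i *
      (if h' : (r:ℕ) < n then b ⟨r, h'⟩ else 0) j *
      (if h' : (r:ℕ) < n then c ⟨r, h'⟩ else 0) k) = ∑ r ∈ Finset.range m, g r := by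
    rw [← Fin.sum_univ_eq_sum_range]
    refine Finset.sum_congr rfl fun r _ => ?_
    by_cases h' : (r : ℕ) < n <;> simp [hg, h']
  rw [e1, e2]
  refine Finset.sum_subset (Finset.range_subset_range.2 h) fun x _ hx => ?_
  simp only [Finset.mem_range, not_lt] at hx
  simp [hg, not_lt.2 hx]

end Aux

open Polynomial in
theorem stmt2 {R : ℕ} (Y : Fin R → Fin R → Fin 2 → ℝ)
    (Y1 Y2 : Matrix (Fin R) (Fin R) ℝ)
    (hY1 : ∀ i j, Y1 i j = Y i j 0) (hY2 : ∀ i j, Y2 i j = Y i j 1)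
    (h1 : IsUnit Y1.det) (h2 : IsUnit Y2.det)
    (hcomplex : ∃ μ : ℂ, μ.im ≠ 0 ∧ Polynomial.aeval μ ((Y2 * Y1⁻¹).charpoly) = 0) :
    R + 1 ≤ tensorRank Y := by
  by_contra hcon
  push_neg at hcon
  have hle : tensorRank Y ≤ R := Nat.lt_succ_iff.mp hcon
  set S := {R' : ℕ | ∃ (a : Fin R' → Fin R → ℝ) (b : Fin R' → Fin R → ℝ)
      (c : Fin R' → Fin 2 → ℝ), ∀ i j k, Y i j k = ∑ r, a r i * b r j * c r k} with hS
  have hne : S.Nonempty := by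
    obtain ⟨a, b, c, hd⟩ := exists_full_decomp Y
    exact ⟨R * (R * 2), a, b, c, hd⟩
  have hmem : tensorRank Y ∈ S := Nat.sInf_mem hne
  obtain ⟨a0, b0, c0, hd0⟩ := hmem
  obtain ⟨a, b, c, hd⟩ := pad_decomp hle Y a0 b0 c0 hd0
  -- matrices
  set A : Matrix (Fin R) (Fin R) ℝ := Matrix.of fun i r => a r i with hA
  set B : Matrix (Fin R) (Fin R) ℝ := Matrix.of fun j r => b r j with hB
  set d0 : Fin R → ℝ := fun r => c r 0 with hd0'
  set d1 : Fin R → ℝ := fun r => c r 1 with hd1'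
  have hfac : ∀ (k : Fin 2) (dk : Fin R → ℝ), (∀ r, dk r = c r k) →
      ∀ (Z : Matrix (Fin R) (Fin R) ℝ), (∀ i j, Z i j = Y i j k) →
      Z = A * Matrix.diagonal dk * Bᵀ := by
    intro k dk hdk Z hZ
    ext i j
    rw [hZ, hd]
    have hrhs : (A * Matrix.diagonal dk * Bᵀ) i j = ∑ x, A i x * dk x * Bᵀ x j := by
      rw [Matrix.mul_apply]
      simp only [Matrix.mul_diagonal]
    rw [hrhs]
    refine Finset.sum_congr rfl fun r _ => ?_
    rw [hdk]
    simp only [Matrix.transpose_apply, Matrix.of_apply, hA, hB]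
    ring
  have hfac1 : Y1 = A * Matrix.diagonal d0 * Bᵀ := hfac 0 d0 (fun _ => rfl) Y1 hY1
  have hfac2 : Y2 = A * Matrix.diagonal d1 * Bᵀ := hfac 1 d1 (fun _ => rfl) Y2 hY2
  have h1' := h1
  rw [hfac1, det_mul, det_mul] at h1'
  have huA : IsUnit A.det := (IsUnit.mul_iff.mp (IsUnit.mul_iff.mp h1').1).1
  have huD0 : IsUnit (Matrix.diagonal d0).det := (IsUnit.mul_iff.mp (IsUnit.mul_iff.mp h1').1).2
  have huB : IsUnit (Bᵀ).det := (IsUnit.mul_iff.mp h1').2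
  have hBB : Bᵀ * (Bᵀ)⁻¹ = 1 := Matrix.mul_nonsing_inv _ huB
  have hsim : Y2 * Y1⁻¹ = A * (Matrix.diagonal d1 * (Matrix.diagonal d0)⁻¹) * A⁻¹ := by
    rw [hfac2, hfac1, Matrix.mul_inv_rev, Matrix.mul_inv_rev]
    simp only [mul_assoc]
    rw [← mul_assoc Bᵀ (Bᵀ)⁻¹, hBB, one_mul]
  set ev : Fin R → ℝ := fun r => d1 r * Ring.inverse d0 r with hev
  have hdiag : Matrix.diagonal d1 * (Matrix.diagonal d0)⁻¹ = Matrix.diagonal ev := by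
    rw [Matrix.inv_diagonal, Matrix.diagonal_mul_diagonal]
  have hcp : (Y2 * Y1⁻¹).charpoly = ∏ r, (X - C (ev r)) := by
    rw [hsim, hdiag, charpoly_conj_aux A _ huA, charpoly_diag]
  obtain ⟨μ, hμim, hμ⟩ := hcomplex
  rw [hcp] at hμ
  simp only [map_prod, map_sub, aeval_X, aeval_C] at hμ
  obtain ⟨r, _, hr⟩ := Finset.prod_eq_zero_iff.mp hμ
  have : μ = algebraMap ℝ ℂ (ev r) := by linear_combination hr
  rw [this] at hμim
  exact hμim (by simp [Complex.ofReal_im])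
end

section
/- Let Z ∈ ℝ^{I×I×2} with frontal slices Z₁, Z₂, and let Q_a, Q_b ∈ ℝ^{I×I} be orthonormal matrices that minimize Σ_{k=1}^{2} ‖Q_aᵀ·Z_k·Q_b‖²_{LFs} over all pairs of orthonormal I×I matrices, where ‖·‖_{LFs} denotes the Frobenius norm of the strictly lower triangular part. Define Z̃_k = Q_aᵀ·Z_k·Q_b and z̃_{(m,n)} = ((Z̃₁)_{mn}, (Z̃₂)_{mn}) ∈ ℝ². Then for all 1 ≤ i < j ≤ I the first-order stationarity conditions hold: Σ_{r=i}^{j−1} ⟨z̃_{(i,r)}, z̃_{(j,r)}⟩ = 0 and Σ_{r=i+1}^{j} ⟨z̃_{(r,i)}, z̃_{(r,j)}⟩ = 0. -/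
open Matrix
open scoped BigOperators

/-- The `k`-th frontal slice of an `I × J × 2` array, as a matrix. -/
def sliceMat {I J : ℕ} (Z : Fin I → Fin J → Fin 2 → ℝ) (k : Fin 2) :
    Matrix (Fin I) (Fin J) ℝ :=
  Matrix.of fun i j => Z i j k

/-- The GSD objective: the sum over the two slices of the squared Frobenius norm of the
strictly lower triangular part of `Qaᵀ * Z_k * Qb`. -/
noncomputable def lfsObj {I : ℕ} (Z : Fin I → Fin I → Fin 2 → ℝ)
    (Qa Qb : Matrix (Fin I) (Fin I) ℝ) : ℝ :=
  ∑ k : Fin 2, ∑ m : Fin I, ∑ n : Fin I,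
    if n < m then ((Qaᵀ * sliceMat Z k * Qb) m n) ^ 2 else 0

/-- Givens rotation in the (i,j) plane. -/
def giv {I : ℕ} (i j : Fin I) (c s : ℝ) : Matrix (Fin I) (Fin I) ℝ :=
  Matrix.of fun p q =>
    if p = i then (if q = i then c else if q = j then -s else 0)
    else if p = j then (if q = i then s else if q = j then c else 0)
    else if p = q then 1 else 0

lemma giv_transpose {I : ℕ} (i j : Fin I) (hij : i ≠ j) (c s : ℝ) :
    (giv i j c s)ᵀ = giv i j c (-s) := by
  ext p q
  simp only [Matrix.transpose_apply, giv, Matrix.of_apply]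
  by_cases hpi : p = i <;> by_cases hpj : p = j <;>
    by_cases hqi : q = i <;> by_cases hqj : q = j <;>
    simp_all [eq_comm]

lemma givT_mul_apply {I : ℕ} (i j : Fin I) (hij : i ≠ j) (c s : ℝ)
    (M : Matrix (Fin I) (Fin I) ℝ) (m n : Fin I) :
    ((giv i j c s)ᵀ * M) m n =
      if m = i then c * M i n + s * M j n
      else if m = j then c * M j n - s * M i n
      else M m n := by
  rw [Matrix.mul_apply]
  simp only [Matrix.transpose_apply]
  by_cases hmi : m = i
  · rw [hmi, if_pos rfl]
    have h : ∀ p : Fin I, giv i j c s p i * M p n =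
        (if p = i then c * M i n else 0) + (if p = j then s * M j n else 0) := by
      intro p
      by_cases hpi : p = i
      · simp [giv, hpi, hij]
      · by_cases hpj : p = j
        · simp [giv, hpi, hpj, hij.symm]
        · simp [giv, hpi, hpj]
    rw [Finset.sum_congr rfl (fun p _ => h p), Finset.sum_add_distrib]
    simp
  · rw [if_neg hmi]
    by_cases hmj : m = j
    · rw [hmj, if_pos rfl]
      have h : ∀ p : Fin I, giv i j c s p j * M p n =
          (if p = i then -s * M i n else 0) + (if p = j then c * M j n else 0) := by
        intro p
        by_cases hpi : p = i
        · simp [giv, hpi, hij, hij.symm]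
        · by_cases hpj : p = j
          · simp [giv, hpi, hpj, hij.symm]
          · simp [giv, hpi, hpj]
      rw [Finset.sum_congr rfl (fun p _ => h p), Finset.sum_add_distrib]
      simp; ring
    · rw [if_neg hmj]
      have h : ∀ p : Fin I, giv i j c s p m * M p n =
          (if p = m then M m n else 0) := by
        intro p
        by_cases hpi : p = i
        · simp [giv, hpi, hmi, hmj, Ne.symm hmi, hij, hij.symm]
        · by_cases hpj : p = j
          · simp [giv, hpi, hpj, hmi, hmj, Ne.symm hmj, hij, hij.symm]
          · by_cases hpm : p = m
            · simp [giv, hpi, hpj, hpm, hmi, hmj]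
            · simp [giv, hpi, hpj, hpm]
      rw [Finset.sum_congr rfl (fun p _ => h p)]
      simp

lemma mul_giv_apply {I : ℕ} (i j : Fin I) (hij : i ≠ j) (c s : ℝ)
    (M : Matrix (Fin I) (Fin I) ℝ) (m n : Fin I) :
    (M * giv i j c s) m n =
      if n = i then c * M m i + s * M m j
      else if n = j then c * M m j - s * M m i
      else M m n := by
  rw [Matrix.mul_apply]
  by_cases hni : n = i
  · rw [hni, if_pos rfl]
    have h : ∀ p : Fin I, M m p * giv i j c s p i =
        (if p = i then c * M m i else 0) + (if p = j then s * M m j else 0) := by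
      intro p
      by_cases hpi : p = i
      · simp [giv, hpi, hij, mul_comm]
      · by_cases hpj : p = j
        · simp [giv, hpi, hpj, hij.symm, mul_comm]
        · simp [giv, hpi, hpj]
    rw [Finset.sum_congr rfl (fun p _ => h p), Finset.sum_add_distrib]
    simp
  · rw [if_neg hni]
    by_cases hnj : n = j
    · rw [hnj, if_pos rfl]
      have h : ∀ p : Fin I, M m p * giv i j c s p j =
          (if p = i then -s * M m i else 0) + (if p = j then c * M m j else 0) := by
        intro p
        by_cases hpi : p = i
        · simp [giv, hpi, hij, hij.symm]; ring
        · by_cases hpj : p = j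
          · simp [giv, hpi, hpj, mul_comm, hij.symm]
          · simp [giv, hpi, hpj]
      rw [Finset.sum_congr rfl (fun p _ => h p), Finset.sum_add_distrib]
      simp; ring
    · rw [if_neg hnj]
      have h : ∀ p : Fin I, M m p * giv i j c s p n =
          (if p = n then M m n else 0) := by
        intro p
        by_cases hpi : p = i
        · simp [giv, hpi, hni, hnj, Ne.symm hni, hij, hij.symm]
        · by_cases hpj : p = j
          · simp [giv, hpi, hpj, hni, hnj, Ne.symm hnj, hij, hij.symm]
          · by_cases hpn : p = n
            · simp [giv, hpi, hpj, hpn, hni, hnj]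
            · simp [giv, hpi, hpj, hpn]
      rw [Finset.sum_congr rfl (fun p _ => h p)]
      simp

lemma givT_mul_giv {I : ℕ} (i j : Fin I) (hij : i ≠ j) (c s : ℝ)
    (hcs : c ^ 2 + s ^ 2 = 1) : (giv i j c s)ᵀ * giv i j c s = 1 := by
  ext m n
  rw [givT_mul_apply i j hij]
  by_cases hmi : m = i
  · rw [if_pos hmi, hmi]
    by_cases hni : n = i
    · rw [hni]; simp [giv, hij, hij.symm, Matrix.one_apply]; linear_combination hcs
    · by_cases hnj : n = j
      · rw [hnj]; simp [giv, hij, Matrix.one_apply, hij.symm]; ring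
      · simp [giv, hij, Matrix.one_apply, hni, hnj, Ne.symm hni,
          Ne.symm hnj]
  · rw [if_neg hmi]
    by_cases hmj : m = j
    · rw [if_pos hmj, hmj]
      by_cases hni : n = i
      · rw [hni]; simp [giv, hij, hij.symm, Matrix.one_apply]; ring
      · by_cases hnj : n = j
        · rw [hnj]; simp [giv, hij, hij.symm, Matrix.one_apply]
          linear_combination hcs
        · simp [giv, hij, hij.symm, Matrix.one_apply, hni, hnj,
            Ne.symm hni, Ne.symm hnj]
    · rw [if_neg hmj]
      simp [giv, hmi, hmj, Matrix.one_apply]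

lemma giv_mul_givT {I : ℕ} (i j : Fin I) (hij : i ≠ j) (c s : ℝ)
    (hcs : c ^ 2 + s ^ 2 = 1) : giv i j c s * (giv i j c s)ᵀ = 1 := by
  have h1 : giv i j c s = (giv i j c (-s))ᵀ := by
    rw [giv_transpose i j hij c (-s), neg_neg]
  rw [giv_transpose i j hij c s, h1]
  exact givT_mul_giv i j hij c (-s) (by linear_combination hcs)

lemma key_zero (C T : ℝ) (h : ∀ t : ℝ, 0 ≤ C * t ^ 2 + T * t ^ 3 - T * t) :
    T = 0 := by
  have hC : 0 ≤ C := by nlinarith [h 1]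
  set D : ℝ := C + T ^ 2 + 1 with hD
  have hD1 : (1 : ℝ) ≤ D := by nlinarith [sq_nonneg T]
  have hDpos : (0 : ℝ) < D := by linarith
  have h2 := h (T / D ^ 2)
  have h3 : 0 ≤ (C * (T / D ^ 2) ^ 2 + T * (T / D ^ 2) ^ 3 - T * (T / D ^ 2)) * D ^ 6 :=
    mul_nonneg h2 (by positivity)
  have h4 : (C * (T / D ^ 2) ^ 2 + T * (T / D ^ 2) ^ 3 - T * (T / D ^ 2)) * D ^ 6
      = C * T ^ 2 * D ^ 2 + T ^ 4 - T ^ 2 * D ^ 4 := by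
    field_simp
  rw [h4] at h3
  have hT2 : T ^ 2 = 0 := by
    nlinarith [sq_nonneg T, sq_nonneg D, sq_nonneg (T * D), sq_nonneg (D - 1),
      mul_nonneg (mul_nonneg hC (sq_nonneg T)) (sq_nonneg D), hD1, hDpos]
  exact pow_eq_zero_iff (n := 2) (by norm_num) |>.mp hT2

lemma obj_left {I : ℕ} (i j : Fin I) (hij : i < j) (c s : ℝ)
    (hcs : c ^ 2 + s ^ 2 = 1) (M : Matrix (Fin I) (Fin I) ℝ) :
    (∑ m : Fin I, ∑ n : Fin I, if n < m then (((giv i j c s)ᵀ * M) m n) ^ 2 else 0)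
      = (∑ m : Fin I, ∑ n : Fin I, if n < m then (M m n) ^ 2 else 0)
        + ∑ r ∈ Finset.univ.filter (fun r : Fin I => i ≤ r ∧ r < j),
            (s ^ 2 * ((M i r) ^ 2 - (M j r) ^ 2) - 2 * c * s * (M i r * M j r)) := by
  have hij' : i ≠ j := ne_of_lt hij
  have hrow : ∀ m : Fin I,
      (∑ n : Fin I, if n < m then (((giv i j c s)ᵀ * M) m n) ^ 2 else 0)
      = (∑ n : Fin I, if n < m then (M m n) ^ 2 else 0)
        + ((if m = i then
              ∑ n : Fin I, (if n < i then ((c * M i n + s * M j n) ^ 2 - (M i n) ^ 2) else 0)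
            else 0)
          + (if m = j then
              ∑ n : Fin I, (if n < j then ((c * M j n - s * M i n) ^ 2 - (M j n) ^ 2) else 0)
            else 0)) := by
    intro m
    by_cases hmi : m = i
    · rw [if_pos hmi, if_neg (by rw [hmi]; exact hij'), hmi, add_zero,
        ← Finset.sum_add_distrib]
      apply Finset.sum_congr rfl
      intro n _
      rw [givT_mul_apply i j hij', if_pos rfl]
      split_ifs <;> ring
    · rw [if_neg hmi]
      by_cases hmj : m = j
      · rw [if_pos hmj, hmj, zero_add, ← Finset.sum_add_distrib]
        apply Finset.sum_congr rfl
        intro n _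
        rw [givT_mul_apply i j hij', if_neg (Ne.symm hij'), if_pos rfl]
        split_ifs <;> ring
      · rw [if_neg hmj, zero_add, add_zero]
        apply Finset.sum_congr rfl
        intro n _
        rw [givT_mul_apply i j hij', if_neg hmi, if_neg hmj]
  rw [Finset.sum_congr rfl (fun m _ => hrow m), Finset.sum_add_distrib,
    Finset.sum_add_distrib]
  simp only [Finset.sum_ite_eq', Finset.mem_univ, if_true]
  congr 1
  rw [← Finset.sum_add_distrib, Finset.sum_filter]
  apply Finset.sum_congr rfl
  intro n _
  by_cases hni : n < i
  · have hnj : n < j := hni.trans hij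
    rw [if_pos hni, if_pos hnj,
      if_neg (fun h : i ≤ n ∧ n < j => absurd hni (not_lt.mpr h.1))]
    linear_combination ((M i n) ^ 2 + (M j n) ^ 2) * hcs
  · by_cases hnj : n < j
    · rw [if_neg hni, if_pos hnj, if_pos ⟨not_lt.mp hni, hnj⟩, zero_add]
      linear_combination (M j n) ^ 2 * hcs
    · rw [if_neg hni, if_neg hnj, if_neg (fun h : i ≤ n ∧ n < j => hnj h.2)]
      ring

lemma obj_right {I : ℕ} (i j : Fin I) (hij : i < j) (c s : ℝ)
    (hcs : c ^ 2 + s ^ 2 = 1) (M : Matrix (Fin I) (Fin I) ℝ) :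
    (∑ m : Fin I, ∑ n : Fin I, if n < m then ((M * giv i j c s) m n) ^ 2 else 0)
      = (∑ m : Fin I, ∑ n : Fin I, if n < m then (M m n) ^ 2 else 0)
        + ∑ r ∈ Finset.univ.filter (fun r : Fin I => i < r ∧ r ≤ j),
            (s ^ 2 * ((M r j) ^ 2 - (M r i) ^ 2) + 2 * c * s * (M r i * M r j)) := by
  have hij' : i ≠ j := ne_of_lt hij
  have hrow : ∀ m : Fin I,
      (∑ n : Fin I, if n < m then ((M * giv i j c s) m n) ^ 2 else 0)
      = (∑ n : Fin I, if n < m then (M m n) ^ 2 else 0)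
        + ((if i < m then ((c * M m i + s * M m j) ^ 2 - (M m i) ^ 2) else 0)
          + (if j < m then ((c * M m j - s * M m i) ^ 2 - (M m j) ^ 2) else 0)) := by
    intro m
    have hterm : ∀ n : Fin I,
        (if n < m then ((M * giv i j c s) m n) ^ 2 else 0)
        = (if n < m then (M m n) ^ 2 else 0)
          + ((if n = i then (if i < m then ((c * M m i + s * M m j) ^ 2 - (M m i) ^ 2) else 0)
              else 0)
            + (if n = j then (if j < m then ((c * M m j - s * M m i) ^ 2 - (M m j) ^ 2) else 0)
              else 0)) := by
      intro n
      by_cases hni : n = i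
      · rw [hni, mul_giv_apply i j hij']
        simp only [if_pos (rfl : i = i), if_neg hij']
        split_ifs <;> ring
      · by_cases hnj : n = j
        · rw [hnj, mul_giv_apply i j hij']
          simp only [if_pos (rfl : j = j), if_neg (Ne.symm hij')]
          split_ifs <;> ring
        · rw [mul_giv_apply i j hij']
          simp only [if_neg hni, if_neg hnj]
          split_ifs <;> ring
    rw [Finset.sum_congr rfl (fun n _ => hterm n), Finset.sum_add_distrib,
      Finset.sum_add_distrib]
    simp only [Finset.sum_ite_eq', Finset.mem_univ, if_true]
  rw [Finset.sum_congr rfl (fun m _ => hrow m), Finset.sum_add_distrib]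
  congr 1
  rw [Finset.sum_filter]
  apply Finset.sum_congr rfl
  intro m _
  by_cases him : i < m
  · by_cases hjm : j < m
    · rw [if_pos him, if_pos hjm,
        if_neg (fun h : i < m ∧ m ≤ j => absurd hjm (not_lt.mpr h.2))]
      linear_combination ((M m i) ^ 2 + (M m j) ^ 2) * hcs
    · rw [if_pos him, if_neg hjm, if_pos ⟨him, not_lt.mp hjm⟩, add_zero]
      linear_combination (M m i) ^ 2 * hcs
  · have hjm : ¬ j < m := fun h => him (hij.trans h)
    rw [if_neg him, if_neg hjm, if_neg (fun h : i < m ∧ m ≤ j => him h.1)]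
    ring

theorem stmt5 {I : ℕ} (Z : Fin I → Fin I → Fin 2 → ℝ)
    (Qa Qb : Matrix (Fin I) (Fin I) ℝ)
    (hQa1 : Qaᵀ * Qa = 1) (hQa2 : Qa * Qaᵀ = 1)
    (hQb1 : Qbᵀ * Qb = 1) (hQb2 : Qb * Qbᵀ = 1)
    (hmin : ∀ Qa' Qb' : Matrix (Fin I) (Fin I) ℝ,
      Qa'ᵀ * Qa' = 1 → Qa' * Qa'ᵀ = 1 → Qb'ᵀ * Qb' = 1 → Qb' * Qb'ᵀ = 1 →
      lfsObj Z Qa Qb ≤ lfsObj Z Qa' Qb')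
    (Zt : Fin 2 → Matrix (Fin I) (Fin I) ℝ)
    (hZt : ∀ k, Zt k = Qaᵀ * sliceMat Z k * Qb) :
    ∀ i j : Fin I, i < j →
      (∑ r ∈ Finset.univ.filter (fun r : Fin I => i ≤ r ∧ r < j),
          ∑ k : Fin 2, Zt k i r * Zt k j r) = 0 ∧
      (∑ r ∈ Finset.univ.filter (fun r : Fin I => i < r ∧ r ≤ j),
          ∑ k : Fin 2, Zt k r i * Zt k r j) = 0 := by
  intro i j hij
  have hij' : i ≠ j := ne_of_lt hij
  constructor
  · -- Part 1: perturb Qa on the right by a Givens rotation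
    set T1 : ℝ := ∑ r ∈ Finset.univ.filter (fun r : Fin I => i ≤ r ∧ r < j),
        ∑ k : Fin 2, Zt k i r * Zt k j r with hT1
    set C1 : ℝ := ∑ r ∈ Finset.univ.filter (fun r : Fin I => i ≤ r ∧ r < j),
        ∑ k : Fin 2, ((Zt k i r) ^ 2 - (Zt k j r) ^ 2) with hC1
    have horthA : ∀ c s : ℝ, c ^ 2 + s ^ 2 = 1 →
        lfsObj Z Qa Qb ≤ lfsObj Z (Qa * giv i j c s) Qb := by
      intro c s hcs
      apply hmin
      · rw [Matrix.transpose_mul, Matrix.mul_assoc, ← Matrix.mul_assoc Qaᵀ, hQa1,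
          Matrix.one_mul]
        exact givT_mul_giv i j hij' c s hcs
      · rw [Matrix.transpose_mul, ← Matrix.mul_assoc, Matrix.mul_assoc Qa,
          giv_mul_givT i j hij' c s hcs, Matrix.mul_one, hQa2]
      · exact hQb1
      · exact hQb2
    have hobjA : ∀ c s : ℝ, c ^ 2 + s ^ 2 = 1 →
        lfsObj Z (Qa * giv i j c s) Qb
          = lfsObj Z Qa Qb + (s ^ 2 * C1 - 2 * c * s * T1) := by
      intro c s hcs
      have hconj : ∀ k, (Qa * giv i j c s)ᵀ * sliceMat Z k * Qb
          = (giv i j c s)ᵀ * Zt k := by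
        intro k
        rw [hZt k, Matrix.transpose_mul]
        simp only [Matrix.mul_assoc]
      simp only [lfsObj, hconj, ← hZt]
      rw [Finset.sum_congr rfl (fun k _ => obj_left i j hij c s hcs (Zt k)),
        Finset.sum_add_distrib]
      congr 1
      rw [Finset.sum_comm, hT1, hC1, Finset.mul_sum, Finset.mul_sum,
        ← Finset.sum_sub_distrib]
      apply Finset.sum_congr rfl
      intro r _
      rw [Finset.mul_sum, Finset.mul_sum, ← Finset.sum_sub_distrib]
    have hineqA : ∀ t : ℝ, 0 ≤ C1 * t ^ 2 + T1 * t ^ 3 - T1 * t := by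
      intro t
      have h1t : (0 : ℝ) < 1 + t ^ 2 := by positivity
      have hcs : ((1 - t ^ 2) / (1 + t ^ 2)) ^ 2 + (2 * t / (1 + t ^ 2)) ^ 2 = 1 := by
        field_simp
        ring
      have hle := horthA _ _ hcs
      rw [hobjA _ _ hcs] at hle
      have h0 : 0 ≤ (2 * t / (1 + t ^ 2)) ^ 2 * C1
          - 2 * ((1 - t ^ 2) / (1 + t ^ 2)) * (2 * t / (1 + t ^ 2)) * T1 := by linarith
      have hexp : (2 * t / (1 + t ^ 2)) ^ 2 * C1
          - 2 * ((1 - t ^ 2) / (1 + t ^ 2)) * (2 * t / (1 + t ^ 2)) * T1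
          = (4 / (1 + t ^ 2) ^ 2) * (C1 * t ^ 2 + T1 * t ^ 3 - T1 * t) := by
        field_simp
        ring
      rw [hexp] at h0
      have hk : (0 : ℝ) < 4 / (1 + t ^ 2) ^ 2 := by positivity
      nlinarith [h0, hk, mul_pos hk h1t]
    exact key_zero C1 T1 hineqA
  · -- Part 2: perturb Qb on the right by a Givens rotation
    set T2 : ℝ := ∑ r ∈ Finset.univ.filter (fun r : Fin I => i < r ∧ r ≤ j),
        ∑ k : Fin 2, Zt k r i * Zt k r j with hT2
    set C2 : ℝ := ∑ r ∈ Finset.univ.filter (fun r : Fin I => i < r ∧ r ≤ j),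
        ∑ k : Fin 2, ((Zt k r j) ^ 2 - (Zt k r i) ^ 2) with hC2
    have horthB : ∀ c s : ℝ, c ^ 2 + s ^ 2 = 1 →
        lfsObj Z Qa Qb ≤ lfsObj Z Qa (Qb * giv i j c s) := by
      intro c s hcs
      apply hmin
      · exact hQa1
      · exact hQa2
      · rw [Matrix.transpose_mul, Matrix.mul_assoc, ← Matrix.mul_assoc Qbᵀ, hQb1,
          Matrix.one_mul]
        exact givT_mul_giv i j hij' c s hcs
      · rw [Matrix.transpose_mul, ← Matrix.mul_assoc, Matrix.mul_assoc Qb,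
          giv_mul_givT i j hij' c s hcs, Matrix.mul_one, hQb2]
    have hobjB : ∀ c s : ℝ, c ^ 2 + s ^ 2 = 1 →
        lfsObj Z Qa (Qb * giv i j c s)
          = lfsObj Z Qa Qb + (s ^ 2 * C2 + 2 * c * s * T2) := by
      intro c s hcs
      have hconj : ∀ k, Qaᵀ * sliceMat Z k * (Qb * giv i j c s)
          = Zt k * giv i j c s := by
        intro k
        rw [hZt k]
        simp only [Matrix.mul_assoc]
      simp only [lfsObj, hconj, ← hZt]
      rw [Finset.sum_congr rfl (fun k _ => obj_right i j hij c s hcs (Zt k)),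
        Finset.sum_add_distrib]
      congr 1
      rw [Finset.sum_comm, hT2, hC2, Finset.mul_sum, Finset.mul_sum,
        ← Finset.sum_add_distrib]
      apply Finset.sum_congr rfl
      intro r _
      rw [Finset.mul_sum, Finset.mul_sum, ← Finset.sum_add_distrib]
    have hineqB : ∀ t : ℝ, 0 ≤ C2 * t ^ 2 + (-T2) * t ^ 3 - (-T2) * t := by
      intro t
      have h1t : (0 : ℝ) < 1 + t ^ 2 := by positivity
      have hcs : ((1 - t ^ 2) / (1 + t ^ 2)) ^ 2 + (2 * t / (1 + t ^ 2)) ^ 2 = 1 := by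
        field_simp
        ring
      have hle := horthB _ _ hcs
      rw [hobjB _ _ hcs] at hle
      have h0 : 0 ≤ (2 * t / (1 + t ^ 2)) ^ 2 * C2
          + 2 * ((1 - t ^ 2) / (1 + t ^ 2)) * (2 * t / (1 + t ^ 2)) * T2 := by linarith
      have hexp : (2 * t / (1 + t ^ 2)) ^ 2 * C2
          + 2 * ((1 - t ^ 2) / (1 + t ^ 2)) * (2 * t / (1 + t ^ 2)) * T2
          = (4 / (1 + t ^ 2) ^ 2) * (C2 * t ^ 2 + (-T2) * t ^ 3 - (-T2) * t) := by
        field_simp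
        ring
      rw [hexp] at h0
      have hk : (0 : ℝ) < 4 / (1 + t ^ 2) ^ 2 := by positivity
      nlinarith [h0, hk, mul_pos hk h1t]
    have := key_zero C2 (-T2) hineqB
    linarith
end

section
/- Let Z ∈ ℝ^{I×I×2} with frontal slices Z₁, Z₂, and let Q_a, Q_b ∈ ℝ^{I×I} be orthonormal matrices that minimize Σ_{k=1}^{2} ‖Q_aᵀ·Z_k·Q_b‖²_{LFs} over all pairs of orthonormal I×I matrices, where ‖·‖_{LFs} denotes the Frobenius norm of the strictly lower triangular part. Define Z̃_k = Q_aᵀ·Z_k·Q_b and z̃_{(m,n)} = ((Z̃₁)_{mn}, (Z̃₂)_{mn}) ∈ ℝ². Then for all 1 ≤ i < j ≤ I the second-order conditions hold: Σ_{r=i}^{j−1} ‖z̃_{(i,r)}‖² − Σ_{r=i}^{j−1} ‖z̃_{(j,r)}‖² ≥ 0 and Σ_{r=i+1}^{j} ‖z̃_{(r,j)}‖² − Σ_{r=i+1}^{j} ‖z̃_{(r,i)}‖² ≥ 0. -/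
open Matrix
open scoped BigOperators

lemma perm_orth₁ {I : ℕ} (σ : Equiv.Perm (Fin I)) (Q : Matrix (Fin I) (Fin I) ℝ)
    (h1 : Qᵀ * Q = 1) :
    (Matrix.of fun m n => Q m (σ n))ᵀ * (Matrix.of fun m n => Q m (σ n)) = 1 := by
  ext m n
  have h := congrFun (congrFun h1 (σ m)) (σ n)
  simp only [Matrix.mul_apply, Matrix.transpose_apply, Matrix.of_apply, Matrix.one_apply,
    EmbeddingLike.apply_eq_iff_eq] at h ⊢
  exact h

lemma perm_orth₂ {I : ℕ} (σ : Equiv.Perm (Fin I)) (Q : Matrix (Fin I) (Fin I) ℝ)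
    (h2 : Q * Qᵀ = 1) :
    (Matrix.of fun m n => Q m (σ n)) * (Matrix.of fun m n => Q m (σ n))ᵀ = 1 := by
  ext m n
  have h := congrFun (congrFun h2 m) n
  simp only [Matrix.mul_apply, Matrix.transpose_apply, Matrix.of_apply] at h ⊢
  rw [Equiv.sum_comp σ (fun k => Q m k * Q n k)]
  exact h

lemma key1 {I : ℕ} (i j m n : Fin I) (hij : i < j) (x : ℝ) :
    (if n < Equiv.swap i j m then x else 0) =
      (if n < m then x else 0)
        + (if m = i then (if i ≤ n ∧ n < j then x else 0) else 0)
        - (if m = j then (if i ≤ n ∧ n < j then x else 0) else 0) := by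
  simp only [Equiv.swap_apply_def]
  split_ifs <;> first | (exfalso; omega) | ring

lemma key2 {I : ℕ} (i j m n : Fin I) (hij : i < j) (x : ℝ) :
    (if Equiv.swap i j n < m then x else 0) =
      (if n < m then x else 0)
        + (if n = j then (if i < m ∧ m ≤ j then x else 0) else 0)
        - (if n = i then (if i < m ∧ m ≤ j then x else 0) else 0) := by
  simp only [Equiv.swap_apply_def]
  split_ifs <;> first | (exfalso; omega) | ring

lemma sum_ite_const {α : Type*} [Fintype α] (c : Prop) [Decidable c] (g : α → ℝ) :
    (∑ n : α, if c then g n else 0) = if c then ∑ n : α, g n else 0 := by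
  split_ifs <;> simp

lemma corr {I : ℕ} (p : Fin I → Prop) [DecidablePred p] (f : Fin 2 → Fin I → ℝ) :
    (∑ k : Fin 2, ∑ n : Fin I, if p n then f k n else 0)
      = ∑ r ∈ Finset.univ.filter p, ∑ k : Fin 2, f k r := by
  rw [Finset.sum_comm]
  simp_rw [sum_ite_const]
  rw [Finset.sum_filter]

theorem stmt6 {I : ℕ} (Z : Fin I → Fin I → Fin 2 → ℝ)
    (Qa Qb : Matrix (Fin I) (Fin I) ℝ)
    (hQa1 : Qaᵀ * Qa = 1) (hQa2 : Qa * Qaᵀ = 1)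
    (hQb1 : Qbᵀ * Qb = 1) (hQb2 : Qb * Qbᵀ = 1)
    (hmin : ∀ Qa' Qb' : Matrix (Fin I) (Fin I) ℝ,
      Qa'ᵀ * Qa' = 1 → Qa' * Qa'ᵀ = 1 → Qb'ᵀ * Qb' = 1 → Qb' * Qb'ᵀ = 1 →
      lfsObj Z Qa Qb ≤ lfsObj Z Qa' Qb')
    (Zt : Fin 2 → Matrix (Fin I) (Fin I) ℝ)
    (hZt : ∀ k, Zt k = Qaᵀ * sliceMat Z k * Qb) :
    ∀ i j : Fin I, i < j →
      (0 ≤ (∑ r ∈ Finset.univ.filter (fun r : Fin I => i ≤ r ∧ r < j),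
              ∑ k : Fin 2, (Zt k i r) ^ 2)
          - ∑ r ∈ Finset.univ.filter (fun r : Fin I => i ≤ r ∧ r < j),
              ∑ k : Fin 2, (Zt k j r) ^ 2) ∧
      (0 ≤ (∑ r ∈ Finset.univ.filter (fun r : Fin I => i < r ∧ r ≤ j),
              ∑ k : Fin 2, (Zt k r j) ^ 2)
          - ∑ r ∈ Finset.univ.filter (fun r : Fin I => i < r ∧ r ≤ j),
              ∑ k : Fin 2, (Zt k r i) ^ 2) := by
  intro i j hij
  set σ := Equiv.swap i j with hσ
  have hbase : lfsObj Z Qa Qb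
      = ∑ k : Fin 2, ∑ m : Fin I, ∑ n : Fin I,
          if n < m then (Zt k m n) ^ 2 else 0 := by
    unfold lfsObj
    refine Finset.sum_congr rfl fun k _ => Finset.sum_congr rfl fun m _ =>
      Finset.sum_congr rfl fun n _ => ?_
    rw [hZt]
  constructor
  · -- row swap: Qa' swaps columns i,j of Qa
    set Qa' : Matrix (Fin I) (Fin I) ℝ := Matrix.of fun m n => Qa m (σ n) with hQa'
    have hle := hmin Qa' Qb (perm_orth₁ σ Qa hQa1) (perm_orth₂ σ Qa hQa2) hQb1 hQb2
    have happ : ∀ (k : Fin 2) (m n : Fin I),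
        (Qa'ᵀ * sliceMat Z k * Qb) m n = Zt k (σ m) n := by
      intro k m n
      rw [hZt]
      simp [Matrix.mul_apply, Matrix.transpose_apply, hQa']
    have hobj : lfsObj Z Qa' Qb
        = ∑ k : Fin 2, ∑ m : Fin I, ∑ n : Fin I,
            if n < σ m then (Zt k m n) ^ 2 else 0 := by
      unfold lfsObj
      refine Finset.sum_congr rfl fun k _ => ?_
      rw [show (∑ m : Fin I, ∑ n : Fin I,
            if n < m then ((Qa'ᵀ * sliceMat Z k * Qb) m n) ^ 2 else 0)
          = ∑ m : Fin I, ∑ n : Fin I,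
            if n < σ m then ((Qa'ᵀ * sliceMat Z k * Qb) (σ m) n) ^ 2 else 0 from
        (Equiv.sum_comp σ _).symm]
      refine Finset.sum_congr rfl fun m _ => Finset.sum_congr rfl fun n _ => ?_
      rw [happ, hσ, Equiv.swap_apply_self]
    have hsplit : lfsObj Z Qa' Qb
        = lfsObj Z Qa Qb
          + (∑ r ∈ Finset.univ.filter (fun r : Fin I => i ≤ r ∧ r < j),
              ∑ k : Fin 2, (Zt k i r) ^ 2)
          - ∑ r ∈ Finset.univ.filter (fun r : Fin I => i ≤ r ∧ r < j),
              ∑ k : Fin 2, (Zt k j r) ^ 2 := by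
      rw [hobj, hbase]
      simp only [hσ]
      simp_rw [fun k m n => key1 i j m n hij ((Zt k m n) ^ 2)]
      simp_rw [Finset.sum_sub_distrib, Finset.sum_add_distrib, sum_ite_const,
        Finset.sum_ite_eq']
      simp only [Finset.mem_univ, if_true]
      rw [corr, corr]
    linarith [hle, hsplit.symm.le]
  · -- column swap: Qb' swaps columns i,j of Qb
    set Qb' : Matrix (Fin I) (Fin I) ℝ := Matrix.of fun m n => Qb m (σ n) with hQb'
    have hle := hmin Qa Qb' hQa1 hQa2 (perm_orth₁ σ Qb hQb1) (perm_orth₂ σ Qb hQb2)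
    have happ : ∀ (k : Fin 2) (m n : Fin I),
        (Qaᵀ * sliceMat Z k * Qb') m n = Zt k m (σ n) := by
      intro k m n
      rw [hZt]
      simp [Matrix.mul_apply, Matrix.transpose_apply, hQb']
    have hobj : lfsObj Z Qa Qb'
        = ∑ k : Fin 2, ∑ m : Fin I, ∑ n : Fin I,
            if σ n < m then (Zt k m n) ^ 2 else 0 := by
      unfold lfsObj
      refine Finset.sum_congr rfl fun k _ => Finset.sum_congr rfl fun m _ => ?_
      rw [show (∑ n : Fin I,
            if n < m then ((Qaᵀ * sliceMat Z k * Qb') m n) ^ 2 else 0)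
          = ∑ n : Fin I,
            if σ n < m then ((Qaᵀ * sliceMat Z k * Qb') m (σ n)) ^ 2 else 0 from
        (Equiv.sum_comp σ _).symm]
      refine Finset.sum_congr rfl fun n _ => ?_
      rw [happ, hσ, Equiv.swap_apply_self]
    have hsplit : lfsObj Z Qa Qb'
        = lfsObj Z Qa Qb
          + (∑ r ∈ Finset.univ.filter (fun r : Fin I => i < r ∧ r ≤ j),
              ∑ k : Fin 2, (Zt k r j) ^ 2)
          - ∑ r ∈ Finset.univ.filter (fun r : Fin I => i < r ∧ r ≤ j),
              ∑ k : Fin 2, (Zt k r i) ^ 2 := by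
      rw [hobj, hbase]
      simp only [hσ]
      simp_rw [fun k m n => key2 i j m n hij ((Zt k m n) ^ 2)]
      simp_rw [Finset.sum_sub_distrib, Finset.sum_add_distrib, Finset.sum_ite_eq']
      simp only [Finset.mem_univ, if_true]
      rw [corr, corr]
    linarith [hle, hsplit.symm.le]
end

section
/- Let R₁, R₂ ∈ ℝ^{R×R} be upper triangular matrices such that for every index i ∈ {1,…,R} the diagonal entries (R₁)_{ii} and (R₂)_{ii} are not both zero. Then there exists an orthonormal 2×2 matrix S = (s_{kl}) such that both mixed slices s₁₁·R₁ + s₁₂·R₂ and s₂₁·R₁ + s₂₂·R₂ are nonsingular. -/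
open Matrix
open scoped BigOperators

theorem stmt8 {R : ℕ} (R1 R2 : Matrix (Fin R) (Fin R) ℝ)
    (hR1 : R1.BlockTriangular id) (hR2 : R2.BlockTriangular id)
    (hdiag : ∀ i : Fin R, R1 i i ≠ 0 ∨ R2 i i ≠ 0) :
    ∃ S : Matrix (Fin 2) (Fin 2) ℝ,
      Sᵀ * S = 1 ∧ S * Sᵀ = 1 ∧
      IsUnit (S 0 0 • R1 + S 0 1 • R2).det ∧
      IsUnit (S 1 0 • R1 + S 1 1 • R2).det := by
  classical
  -- choose x avoiding finitely many bad values
  obtain ⟨x, hx⟩ := Infinite.exists_notMem_finset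
    ((Finset.univ.image fun i : Fin R => -R1 i i / R2 i i) ∪
     (Finset.univ.image fun i : Fin R => R2 i i / R1 i i))
  have h1 : ∀ i : Fin R, R1 i i + x * R2 i i ≠ 0 := by
    intro i h
    rcases eq_or_ne (R2 i i) 0 with h2 | h2
    · rcases hdiag i with h3 | h3
      · exact h3 (by linarith [h, h2, mul_eq_zero_of_right x h2])
      · exact h3 h2
    · apply hx
      apply Finset.mem_union_left
      apply Finset.mem_image.2 ⟨i, Finset.mem_univ i, ?_⟩
      field_simp
      linarith [h]
  have h2 : ∀ i : Fin R, -(x * R1 i i) + R2 i i ≠ 0 := by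
    intro i h
    rcases eq_or_ne (R1 i i) 0 with h2 | h2
    · rcases hdiag i with h3 | h3
      · exact h3 h2
      · exact h3 (by rw [h2] at h; linarith)
    · apply hx
      apply Finset.mem_union_right
      apply Finset.mem_image.2 ⟨i, Finset.mem_univ i, ?_⟩
      field_simp
      linarith [h]
  set n : ℝ := Real.sqrt (1 + x ^ 2) with hn
  have hxpos : (0:ℝ) < 1 + x ^ 2 := by positivity
  have hnpos : 0 < n := Real.sqrt_pos.2 hxpos
  have hn2 : n ^ 2 = 1 + x ^ 2 := Real.sq_sqrt hxpos.le
  have hnne : n ≠ 0 := hnpos.ne'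
  have ht : (!![1/n, x/n; -(x/n), 1/n])ᵀ = !![1/n, -(x/n); x/n, 1/n] :=
    by ext i j; fin_cases i <;> fin_cases j <;> rfl
  refine ⟨!![1/n, x/n; -(x/n), 1/n], ?_, ?_, ?_, ?_⟩
  · rw [ht]
    ext i j
    fin_cases i <;> fin_cases j <;>
      simp [Matrix.mul_apply, Fin.sum_univ_two, Matrix.one_apply] <;>
      field_simp <;> nlinarith [hn2]
  · rw [ht]
    ext i j
    fin_cases i <;> fin_cases j <;>
      simp [Matrix.mul_apply, Fin.sum_univ_two, Matrix.one_apply] <;>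
      field_simp <;> nlinarith [hn2]
  · have hbt : (((1:ℝ)/n) • R1 + (x/n) • R2).BlockTriangular id := by
      intro i j hij
      simp [hR1 hij, hR2 hij]
    rw [show (!![1/n, x/n; -(x/n), 1/n] : Matrix (Fin 2) (Fin 2) ℝ) 0 0 = 1/n by norm_num,
        show (!![1/n, x/n; -(x/n), 1/n] : Matrix (Fin 2) (Fin 2) ℝ) 0 1 = x/n by norm_num,
        Matrix.det_of_upperTriangular hbt, isUnit_iff_ne_zero, Finset.prod_ne_zero_iff]
    intro i _
    have := h1 i
    simp only [Matrix.add_apply, Matrix.smul_apply, smul_eq_mul]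
    intro h
    apply this
    have : (1/n) * R1 i i + (x/n) * R2 i i = (R1 i i + x * R2 i i) / n := by ring
    rw [this] at h
    exact (div_eq_zero_iff.mp h).resolve_right hnne
  · have hbt : ((-(x/n)) • R1 + ((1:ℝ)/n) • R2).BlockTriangular id := by
      intro i j hij
      simp [hR1 hij, hR2 hij]
    rw [show (!![1/n, x/n; -(x/n), 1/n] : Matrix (Fin 2) (Fin 2) ℝ) 1 0 = -(x/n) by norm_num,
        show (!![1/n, x/n; -(x/n), 1/n] : Matrix (Fin 2) (Fin 2) ℝ) 1 1 = 1/n by norm_num,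
        Matrix.det_of_upperTriangular hbt, isUnit_iff_ne_zero, Finset.prod_ne_zero_iff]
    intro i _
    have := h2 i
    simp only [Matrix.add_apply, Matrix.smul_apply, smul_eq_mul]
    intro h
    apply this
    have : (-(x/n)) * R1 i i + (1/n) * R2 i i = (-(x * R1 i i) + R2 i i) / n := by ring
    rw [this] at h
    exact (div_eq_zero_iff.mp h).resolve_right hnne
end

section
/- Fix I ≥ 2. For Lebesgue-almost every Z ∈ ℝ^{I×I×2} the following holds: suppose rank(Z) = I+1 and (Q_a, Q_b, R₁, R₂) is an optimal solution of the GSD problem for Z with R = I, with R₁ and R₂ nonsingular. Let d ≥ 2 and 1 ≤ h ≤ I−d+1, and let W_k (k = 1,2) be the d×d submatrix of Q_aᵀ·Z_k·Q_b consisting of rows h,…,h+d−1 and columns h,…,h+d−1. If there exists λ ≠ 0 such that the upper triangular part (diagonal included) of W₂ − λ·W₁ is zero, then both W₁ and W₂ are upper triangular. -/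
open Matrix MeasureTheory
open scoped BigOperators

/-- The GSD objective function: `∑ₖ ‖Z_k - Qa R_k Qbᵀ‖²_F`. -/
noncomputable def gsdObj {I J R : ℕ} (Z : Fin I → Fin J → Fin 2 → ℝ)
    (Qa : Matrix (Fin I) (Fin R) ℝ) (Qb : Matrix (Fin J) (Fin R) ℝ)
    (R1 R2 : Matrix (Fin R) (Fin R) ℝ) : ℝ :=
  ∑ k : Fin 2, ∑ i, ∑ j, (Z i j k - (Qa * (![R1, R2] k) * Qbᵀ) i j) ^ 2

/-!
Write `A_k = Qaᵀ Z_k Qb`. By orthogonal invariance of the Frobenius norm the GSD objective is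
`‖A₀ - R₁‖² + ‖A₁ - R₂‖²`, whose minimum over upper triangular `R_k` is the mass
`lowerSq A₀ + lowerSq A₁` of the strictly lower parts. Hence at an optimum `R₁` carries the
diagonal of `A₀`, and no orthogonal change `A_k ↦ G A_k Hᵀ` decreases that lower mass. Taking `G`,
`H` equal to the identity outside the diagonal block `h, …, h + d - 1` transfers this minimality
to the blocks `W_k`, and it survives the rotation of the pencil to `T = W₁ + λ W₂`,
`N = W₂ - λ W₁` (the lower mass only scales by `1 + λ²`), where `N` is strictly lower triangular
and `T` has nonzero diagonal.

For an orthogonal `V`, a QR factorisation gives an orthogonal `U` with `U T Vᵀ` upper triangular;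
minimality then forces `T` to be upper triangular and `U N Vᵀ` strictly lower triangular, so
`V (Tᵀ N) Vᵀ = (U T Vᵀ)ᵀ (U N Vᵀ)` is strictly lower triangular. Taking for `V` the identity and
the order-reversing permutation gives `Tᵀ N = 0`, hence `N = 0`, and `W₁`, `W₂` are multiples
of `T`.
-/

namespace Matrix

section SqSum

variable {m n : Type*} [Fintype m] [Fintype n]

open scoped Classical in
noncomputable def sqSumOn (r : m → n → Prop) (M : Matrix m n ℝ) : ℝ :=
  ∑ i, ∑ j, if r i j then M i j ^ 2 else 0

noncomputable def frobSq (M : Matrix m n ℝ) : ℝ := ∑ i, ∑ j, M i j ^ 2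

lemma frobSq_eq_trace (M : Matrix m n ℝ) : frobSq M = (Mᵀ * M).trace := by
  rw [frobSq, trace, Finset.sum_comm]
  simp [diag, mul_apply, sq]

lemma frobSq_transpose (M : Matrix m n ℝ) : frobSq Mᵀ = frobSq M := by
  rw [frobSq, frobSq, Finset.sum_comm]; rfl

lemma frobSq_mul_left [DecidableEq m] {m' : Type*} [Fintype m'] {U : Matrix m' m ℝ}
    (hU : Uᵀ * U = 1) (M : Matrix m n ℝ) : frobSq (U * M) = frobSq M := by
  rw [frobSq_eq_trace, frobSq_eq_trace, transpose_mul, Matrix.mul_assoc, ← Matrix.mul_assoc Uᵀ,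
    hU, Matrix.one_mul]

lemma frobSq_mul_transpose_right [DecidableEq n] {n' : Type*} [Fintype n'] {V : Matrix n' n ℝ}
    (hV : Vᵀ * V = 1) (M : Matrix m n ℝ) : frobSq (M * Vᵀ) = frobSq M := by
  rw [← frobSq_transpose, transpose_mul, transpose_transpose, frobSq_mul_left hV, frobSq_transpose]

variable {r : m → n → Prop} {M : Matrix m n ℝ}

lemma sqSumOn_nonneg (r : m → n → Prop) (M : Matrix m n ℝ) : 0 ≤ sqSumOn r M := by
  unfold sqSumOn; positivity

lemma sqSumOn_add_sqSumOn_not (r : m → n → Prop) (M : Matrix m n ℝ) :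
    sqSumOn r M + sqSumOn (fun i j => ¬ r i j) M = frobSq M := by
  simp only [sqSumOn, frobSq, ← Finset.sum_add_distrib]
  congr! 2 with i _ j _
  split_ifs <;> simp_all

lemma sqSumOn_eq_zero_iff : sqSumOn r M = 0 ↔ ∀ i j, r i j → M i j = 0 := by
  simp only [sqSumOn]
  rw [Fintype.sum_eq_zero_iff_of_nonneg fun _ => by positivity]
  simp only [funext_iff, Pi.zero_apply]
  refine forall_congr' fun i => ?_
  rw [Fintype.sum_eq_zero_iff_of_nonneg fun _ => by positivity]
  simp only [funext_iff, Pi.zero_apply]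
  refine forall_congr' fun j => ?_
  split_ifs with h <;> simp [h]

lemma sqSumOn_congr {M' : Matrix m n ℝ} (h : ∀ i j, r i j → M i j = M' i j) :
    sqSumOn r M = sqSumOn r M' := by
  simp only [sqSumOn]
  congr! 3 with i _ j _ hij
  rw [h i j hij]

lemma sqSumOn_transpose {r : n → m → Prop} : sqSumOn r Mᵀ = sqSumOn (fun i j => r j i) M := by
  rw [sqSumOn, sqSumOn, Finset.sum_comm]; rfl

open scoped Classical in
lemma sqSumOn_submatrix {m' n' : Type*} [Fintype m'] [Fintype n'] (σ : m' ≃ m) (τ : n' ≃ n) :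
    sqSumOn (fun a b => r (σ a) (τ b)) (M.submatrix σ τ) = sqSumOn r M := by
  simp only [sqSumOn, submatrix_apply]
  rw [← σ.sum_comp]
  exact Finset.sum_congr rfl fun i _ =>
    τ.sum_comp fun j => if r (σ i) j then M (σ i) j ^ 2 else 0

lemma sqSumOn_fromBlocks {m' n' : Type*} [Fintype m'] [Fintype n'] (r : m ⊕ m' → n ⊕ n' → Prop)
    (A : Matrix m n ℝ) (B : Matrix m n' ℝ) (C : Matrix m' n ℝ) (D : Matrix m' n' ℝ) :
    sqSumOn r (fromBlocks A B C D) =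
      sqSumOn (fun i j => r (.inl i) (.inl j)) A + sqSumOn (fun i j => r (.inl i) (.inr j)) B +
        sqSumOn (fun i j => r (.inr i) (.inl j)) C +
          sqSumOn (fun i j => r (.inr i) (.inr j)) D := by
  simp only [sqSumOn, Fintype.sum_sum_type, fromBlocks_apply₁₁, fromBlocks_apply₁₂,
    fromBlocks_apply₂₁, fromBlocks_apply₂₂, Finset.sum_add_distrib]
  ring

open scoped Classical in
lemma sqSumOn_eq_frobSq_mul_diagonal [DecidableEq n] (c : n → Prop) (M : Matrix m n ℝ) :
    sqSumOn (fun _ j => c j) M = frobSq (M * diagonal fun j => if c j then (1 : ℝ) else 0) := by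
  simp only [sqSumOn, frobSq, mul_diagonal]
  congr! 2 with i _ j _
  split_ifs <;> simp

lemma sqSumOn_mul_left [DecidableEq m] {U : Matrix m m ℝ} (hU : Uᵀ * U = 1) {r : m → n → Prop}
    (hr : ∀ i i' j, r i j ↔ r i' j) (M : Matrix m n ℝ) : sqSumOn r (U * M) = sqSumOn r M := by
  classical
  set c : n → Prop := fun j => ∃ i, r i j
  have hr' : r = fun _ j => c j := by
    ext i j
    exact ⟨fun h => ⟨i, h⟩, fun ⟨i', h⟩ => (hr i' i j).1 h⟩
  rw [hr', sqSumOn_eq_frobSq_mul_diagonal, sqSumOn_eq_frobSq_mul_diagonal, Matrix.mul_assoc,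
    frobSq_mul_left hU]

lemma sqSumOn_mul_transpose_right [DecidableEq n] {V : Matrix n n ℝ} (hV : Vᵀ * V = 1)
    {r : m → n → Prop} (hr : ∀ i j j', r i j ↔ r i j') (M : Matrix m n ℝ) :
    sqSumOn r (M * Vᵀ) = sqSumOn r M := by
  have h := sqSumOn_mul_left hV (r := fun j i => r i j) (fun j j' i => hr i j j') Mᵀ
  calc sqSumOn r (M * Vᵀ) = sqSumOn r (V * Mᵀ)ᵀ := by rw [transpose_mul, transpose_transpose]
    _ = sqSumOn r Mᵀᵀ := by rw [sqSumOn_transpose, sqSumOn_transpose, h]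
    _ = sqSumOn r M := by rw [transpose_transpose]

lemma sqSumOn_add_smul_add_sqSumOn_sub_smul (r : m → n → Prop) (P Q : Matrix m n ℝ) (c : ℝ) :
    sqSumOn r (P + c • Q) + sqSumOn r (Q - c • P) =
      (1 + c ^ 2) * (sqSumOn r P + sqSumOn r Q) := by
  simp only [sqSumOn, ← Finset.sum_add_distrib, Finset.mul_sum]
  congr! 2 with i _ j _
  split_ifs
  · simp only [add_apply, sub_apply, smul_apply, smul_eq_mul]; ring
  · ring

end SqSum

section Triangular

variable {n : Type*} [LinearOrder n]

def upperPart (M : Matrix n n ℝ) : Matrix n n ℝ := of fun i j => if j < i then 0 else M i j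

lemma upperPart_blockTriangular (M : Matrix n n ℝ) : (upperPart M).BlockTriangular id :=
  fun _ _ hij => if_pos hij

variable [Fintype n]

lemma BlockTriangular.diag_ne_zero {R : Matrix n n ℝ} (hR : R.BlockTriangular id)
    (hdet : IsUnit R.det) (i : n) : R i i ≠ 0 := by
  rw [det_of_isUpperTriangular hR] at hdet
  exact Finset.prod_ne_zero_iff.1 hdet.ne_zero i (Finset.mem_univ i)

noncomputable def lowerSq (M : Matrix n n ℝ) : ℝ := sqSumOn (fun i j => j < i) M

noncomputable def upperSq (M : Matrix n n ℝ) : ℝ := sqSumOn (fun i j => i ≤ j) M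

lemma lowerSq_nonneg (M : Matrix n n ℝ) : 0 ≤ lowerSq M := sqSumOn_nonneg _ M

lemma upperSq_nonneg (M : Matrix n n ℝ) : 0 ≤ upperSq M := sqSumOn_nonneg _ M

lemma lowerSq_add_upperSq (M : Matrix n n ℝ) : lowerSq M + upperSq M = frobSq M := by
  simpa only [lowerSq, upperSq, not_lt] using sqSumOn_add_sqSumOn_not (fun i j => j < i) M

lemma lowerSq_eq_zero_iff {M : Matrix n n ℝ} : lowerSq M = 0 ↔ M.BlockTriangular id :=
  sqSumOn_eq_zero_iff

lemma upperSq_eq_zero_iff {M : Matrix n n ℝ} : upperSq M = 0 ↔ ∀ i j, i ≤ j → M i j = 0 :=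
  sqSumOn_eq_zero_iff

lemma lowerSq_sub_of_blockTriangular (A : Matrix n n ℝ) {R : Matrix n n ℝ}
    (hR : R.BlockTriangular id) : lowerSq (A - R) = lowerSq A :=
  sqSumOn_congr fun i j hij => by rw [sub_apply, hR hij, sub_zero]

lemma frobSq_sub_of_blockTriangular (A : Matrix n n ℝ) {R : Matrix n n ℝ}
    (hR : R.BlockTriangular id) : frobSq (A - R) = lowerSq A + upperSq (A - R) := by
  rw [← lowerSq_add_upperSq, lowerSq_sub_of_blockTriangular A hR]

lemma upperSq_sub_upperPart (M : Matrix n n ℝ) : upperSq (M - upperPart M) = 0 :=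
  upperSq_eq_zero_iff.2 fun i j hij => by simp [upperPart, not_lt.2 hij]

lemma lowerSq_add_smul_add_lowerSq_sub_smul (P Q : Matrix n n ℝ) (c : ℝ) :
    lowerSq (P + c • Q) + lowerSq (Q - c • P) = (1 + c ^ 2) * (lowerSq P + lowerSq Q) :=
  sqSumOn_add_smul_add_sqSumOn_sub_smul _ P Q c

lemma transpose_mul_apply_eq_zero_of_le {X Y : Matrix n n ℝ} (hX : X.BlockTriangular id)
    (hY : ∀ i j, i ≤ j → Y i j = 0) {i j : n} (hij : i ≤ j) : (Xᵀ * Y) i j = 0 := by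
  rw [mul_apply]
  refine Finset.sum_eq_zero fun k _ => ?_
  rcases lt_or_ge i k with hik | hki
  · rw [transpose_apply, hX hik, zero_mul]
  · rw [hY k j (hki.trans hij), mul_zero]

end Triangular

section LowerSqMinimal

variable {d : ℕ}

lemma exists_orthogonal_mul_blockTriangular (A : Matrix (Fin d) (Fin d) ℝ) :
    ∃ U : Matrix (Fin d) (Fin d) ℝ, Uᵀ * U = 1 ∧ (U * A).BlockTriangular id := by
  let std := EuclideanSpace.basisFun (Fin d) ℝ
  let b := InnerProductSpace.gramSchmidtOrthonormalBasis finrank_euclideanSpace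
    (fun j => WithLp.toLp 2 (Aᵀ j))
  refine ⟨b.toBasis.toMatrix std.toBasis, ?_, ?_⟩
  · exact (mem_orthogonalGroup_iff' _ _).1 (b.toMatrix_orthonormalBasis_mem_orthogonal std)
  · have hA : std.toBasis.toMatrix (fun j => WithLp.toLp 2 (Aᵀ j)) = A := by
      ext i j; rfl
    rw [← hA, Module.Basis.toMatrix_mul_toMatrix]
    exact InnerProductSpace.gramSchmidtOrthonormalBasis_inv_isUpperTriangular _ _

lemma eq_zero_of_forall_orthogonal_conj {K : Matrix (Fin d) (Fin d) ℝ}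
    (hK : ∀ V : Matrix (Fin d) (Fin d) ℝ, Vᵀ * V = 1 → ∀ i j, i ≤ j → (V * K * Vᵀ) i j = 0) :
    K = 0 := by
  let P := (Fin.revPerm : Equiv.Perm (Fin d)).permMatrix ℝ
  have hP : Pᵀ * P = 1 := by
    rw [transpose_permMatrix, ← permMatrix_mul, mul_inv_cancel, permMatrix_one]
  ext i j
  rcases le_total i j with hij | hji
  · simpa using hK 1 (by simp) i j hij
  · simpa [P, PEquiv.toMatrix_toPEquiv_mul, PEquiv.mul_toMatrix_toPEquiv, Equiv.Perm.inv_def]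
      using hK P hP (Fin.rev i) (Fin.rev j) (Fin.rev_le_rev.2 hji)

lemma blockTriangular_and_eq_zero_of_lowerSq_le {T N : Matrix (Fin d) (Fin d) ℝ}
    (hT : ∀ i, T i i ≠ 0) (hN : ∀ i j, i ≤ j → N i j = 0)
    (hmin : ∀ U V : Matrix (Fin d) (Fin d) ℝ, Uᵀ * U = 1 → Vᵀ * V = 1 →
      lowerSq T + lowerSq N ≤ lowerSq (U * T * Vᵀ) + lowerSq (U * N * Vᵀ)) :
    T.BlockTriangular id ∧ N = 0 := by
  have hNsq : lowerSq N = frobSq N := by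
    rw [← lowerSq_add_upperSq, upperSq_eq_zero_iff.2 hN, add_zero]
  have hconj : ∀ V : Matrix (Fin d) (Fin d) ℝ, Vᵀ * V = 1 →
      lowerSq T = 0 ∧ ∀ i j, i ≤ j → (V * (Tᵀ * N) * Vᵀ) i j = 0 := by
    intro V hV
    obtain ⟨U, hU, hUT⟩ := exists_orthogonal_mul_blockTriangular (T * Vᵀ)
    rw [← Matrix.mul_assoc] at hUT
    have h := hmin U V hU hV
    rw [lowerSq_eq_zero_iff.2 hUT, zero_add, hNsq, ← frobSq_mul_left hU,
      ← frobSq_mul_transpose_right hV, ← lowerSq_add_upperSq (U * N * Vᵀ)] at h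
    have hUN := upperSq_nonneg (U * N * Vᵀ)
    have hT0 : lowerSq T = 0 := by linarith [lowerSq_nonneg T]
    have hUN0 : upperSq (U * N * Vᵀ) = 0 := by linarith [lowerSq_nonneg T]
    refine ⟨hT0, fun i j hij => ?_⟩
    have hTN : V * (Tᵀ * N) * Vᵀ = (U * T * Vᵀ)ᵀ * (U * N * Vᵀ) := by
      calc V * (Tᵀ * N) * Vᵀ = V * (Tᵀ * (Uᵀ * U) * N) * Vᵀ := by rw [hU, Matrix.mul_one]
        _ = _ := by simp only [transpose_mul, transpose_transpose, Matrix.mul_assoc]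
    rw [hTN]
    exact transpose_mul_apply_eq_zero_of_le hUT (upperSq_eq_zero_iff.1 hUN0) hij
  have hTtri : T.BlockTriangular id := lowerSq_eq_zero_iff.1 (hconj 1 (by simp)).1
  have hTunit : IsUnit Tᵀ := by
    rw [isUnit_iff_isUnit_det, det_transpose, det_of_isUpperTriangular hTtri]
    exact (Finset.prod_ne_zero_iff.2 fun i _ => hT i).isUnit
  exact ⟨hTtri, hTunit.mul_right_eq_zero.1
    (eq_zero_of_forall_orthogonal_conj fun V hV => (hconj V hV).2)⟩

lemma blockTriangular_of_lowerSq_le_of_pencil {W₁ W₂ : Matrix (Fin d) (Fin d) ℝ} {c : ℝ}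
    (hdiag : ∀ i, W₁ i i ≠ 0) (hpencil : ∀ i j, i ≤ j → (W₂ - c • W₁) i j = 0)
    (hmin : ∀ U V : Matrix (Fin d) (Fin d) ℝ, Uᵀ * U = 1 → Vᵀ * V = 1 →
      lowerSq W₁ + lowerSq W₂ ≤ lowerSq (U * W₁ * Vᵀ) + lowerSq (U * W₂ * Vᵀ)) :
    W₁.BlockTriangular id ∧ W₂.BlockTriangular id := by
  have hc : 0 < 1 + c ^ 2 := by positivity
  set T := W₁ + c • W₂
  have hT : ∀ i, T i i ≠ 0 := fun i => by
    have h := hpencil i i le_rfl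
    simp only [sub_apply, smul_apply, smul_eq_mul, sub_eq_zero] at h
    simp only [T, add_apply, smul_apply, smul_eq_mul, h]
    have := mul_ne_zero hc.ne' (hdiag i)
    contrapose! this
    linear_combination this
  have hminTN : ∀ U V : Matrix (Fin d) (Fin d) ℝ, Uᵀ * U = 1 → Vᵀ * V = 1 →
      lowerSq T + lowerSq (W₂ - c • W₁) ≤
        lowerSq (U * T * Vᵀ) + lowerSq (U * (W₂ - c • W₁) * Vᵀ) := fun U V hU hV => by
    simp only [T, Matrix.mul_add, Matrix.add_mul, Matrix.mul_sub, Matrix.sub_mul, Matrix.mul_smul,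
      Matrix.smul_mul, lowerSq_add_smul_add_lowerSq_sub_smul]
    exact mul_le_mul_of_nonneg_left (hmin U V hU hV) hc.le
  obtain ⟨hTtri, hN⟩ := blockTriangular_and_eq_zero_of_lowerSq_le hT hpencil hminTN
  have hW₂ : W₂ = c • W₁ := sub_eq_zero.1 hN
  have hW₁ : W₁.BlockTriangular id := fun i j hij => by
    have h := hTtri hij
    simp only [T, hW₂, add_apply, smul_apply, smul_eq_mul] at h
    have : (1 + c ^ 2) * W₁ i j = 0 := by linear_combination h
    exact (mul_eq_zero.1 this).resolve_left hc.ne'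
  exact ⟨hW₁, fun i j hij => by simp [hW₂, hW₁ hij]⟩

end LowerSqMinimal

section BlockEmbed

variable {ι κ : Type*} [LinearOrder ι] [LinearOrder κ]

open scoped Classical in
noncomputable def rangeSumCompl (e : κ ↪o ι) : κ ⊕ ↥(Set.range e)ᶜ ≃ ι :=
  ((Equiv.ofInjective e e.injective).sumCongr (Equiv.refl _)).trans (Equiv.Set.sumCompl _)

@[simp]
lemma rangeSumCompl_inl (e : κ ↪o ι) (p : κ) : rangeSumCompl e (.inl p) = e p := rfl

@[simp]
lemma rangeSumCompl_inr (e : κ ↪o ι) (i : ↥(Set.range e)ᶜ) : rangeSumCompl e (.inr i) = i := rfl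

noncomputable def blockEmbed (e : κ ↪o ι) (U : Matrix κ κ ℝ) : Matrix ι ι ℝ :=
  (fromBlocks U 0 0 1).submatrix (rangeSumCompl e).symm (rangeSumCompl e).symm

lemma blockEmbed_submatrix (e : κ ↪o ι) (U : Matrix κ κ ℝ) :
    (blockEmbed e U).submatrix (rangeSumCompl e) (rangeSumCompl e) = fromBlocks U 0 0 1 := by
  simp [blockEmbed]

variable {e : κ ↪o ι}

lemma lt_apply_iff_of_notMem_range (he : (Set.range e).OrdConnected) {j : ι}
    (hj : j ∉ Set.range e) (p p' : κ) : j < e p ↔ j < e p' := by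
  suffices ∀ p p', j < e p → j < e p' from ⟨this p p', this p' p⟩
  intro p p' hp
  by_contra! hp'
  exact hj (he.out ⟨p', rfl⟩ ⟨p, rfl⟩ ⟨hp', hp.le⟩)

lemma apply_lt_iff_of_notMem_range (he : (Set.range e).OrdConnected) {i : ι}
    (hi : i ∉ Set.range e) (q q' : κ) : e q < i ↔ e q' < i := by
  suffices ∀ q q', e q < i → e q' < i from ⟨this q q', this q' q⟩
  intro q q' hq
  by_contra! hq'
  exact hi (he.out ⟨q, rfl⟩ ⟨q', rfl⟩ ⟨hq.le, hq'⟩)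

variable [Fintype ι] [Fintype κ]

lemma transpose_blockEmbed_mul_self (e : κ ↪o ι) {U : Matrix κ κ ℝ} (hU : Uᵀ * U = 1) :
    (blockEmbed e U)ᵀ * blockEmbed e U = 1 := by
  rw [blockEmbed, transpose_submatrix, submatrix_mul_equiv, fromBlocks_transpose,
    fromBlocks_multiply]
  simp [hU, fromBlocks_one]

/- Since the block is order-convex, in each off-diagonal block the strictly lower mask is constant
along the block index, where `U` resp. `V` acts isometrically. -/
lemma lowerSq_blockEmbed_conj (he : (Set.range e).OrdConnected) {U V : Matrix κ κ ℝ}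
    (hU : Uᵀ * U = 1) (hV : Vᵀ * V = 1) (A : Matrix ι ι ℝ) :
    lowerSq (blockEmbed e U * A * (blockEmbed e V)ᵀ) + lowerSq (A.submatrix e e) =
      lowerSq A + lowerSq (U * A.submatrix e e * Vᵀ) := by
  classical
  set σ := rangeSumCompl e
  have hlower (M : Matrix ι ι ℝ) :
      lowerSq M = sqSumOn (fun a b => σ b < σ a) (M.submatrix σ σ) :=
    (sqSumOn_submatrix σ σ).symm
  set B := (A.submatrix σ σ).toBlocks₁₂
  set C := (A.submatrix σ σ).toBlocks₂₁
  set D := (A.submatrix σ σ).toBlocks₂₂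
  have hA : A.submatrix σ σ = fromBlocks (A.submatrix e e) B C D := (fromBlocks_toBlocks _).symm
  have hconj : (blockEmbed e U * A * (blockEmbed e V)ᵀ).submatrix σ σ =
      fromBlocks (U * A.submatrix e e * Vᵀ) (U * B) (C * Vᵀ) D := by
    rw [submatrix_mul _ _ _ σ _ σ.bijective, submatrix_mul _ _ _ σ _ σ.bijective,
      ← transpose_submatrix, blockEmbed_submatrix, blockEmbed_submatrix, hA, fromBlocks_transpose,
      fromBlocks_multiply, fromBlocks_multiply]
    simp
  rw [hlower, hlower A, hconj, hA, sqSumOn_fromBlocks, sqSumOn_fromBlocks]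
  simp only [σ, rangeSumCompl_inl, rangeSumCompl_inr, e.lt_iff_lt]
  rw [sqSumOn_mul_left hU (r := fun p (j : ↥(Set.range e)ᶜ) => j < e p)
      fun p p' j => lt_apply_iff_of_notMem_range he j.2 p p',
    sqSumOn_mul_transpose_right hV (r := fun (i : ↥(Set.range e)ᶜ) q => e q < i)
      fun i q q' => apply_lt_iff_of_notMem_range he i.2 q q']
  unfold lowerSq
  ring

lemma lowerSq_submatrix_le_of_forall_le (he : (Set.range e).OrdConnected) {A₀ A₁ : Matrix ι ι ℝ}
    (h : ∀ G H : Matrix ι ι ℝ, Gᵀ * G = 1 → Hᵀ * H = 1 →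
      lowerSq A₀ + lowerSq A₁ ≤ lowerSq (G * A₀ * Hᵀ) + lowerSq (G * A₁ * Hᵀ))
    {U V : Matrix κ κ ℝ} (hU : Uᵀ * U = 1) (hV : Vᵀ * V = 1) :
    lowerSq (A₀.submatrix e e) + lowerSq (A₁.submatrix e e) ≤
      lowerSq (U * A₀.submatrix e e * Vᵀ) + lowerSq (U * A₁.submatrix e e * Vᵀ) := by
  have := h _ _ (transpose_blockEmbed_mul_self e hU) (transpose_blockEmbed_mul_self e hV)
  linarith [lowerSq_blockEmbed_conj he hU hV A₀, lowerSq_blockEmbed_conj he hU hV A₁]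

end BlockEmbed

lemma transpose_mul_mul_transpose_eq_one {n : Type*} [Fintype n] [DecidableEq n]
    {Q G : Matrix n n ℝ} (hQ : Qᵀ * Q = 1) (hG : Gᵀ * G = 1) : (Q * Gᵀ)ᵀ * (Q * Gᵀ) = 1 := by
  rw [transpose_mul, transpose_transpose, Matrix.mul_assoc, ← Matrix.mul_assoc Qᵀ, hQ,
    Matrix.one_mul, mul_eq_one_comm.1 hG]

end Matrix

lemma Fin.ordConnected_range_natAdd_castLE {m d I : ℕ} (h : m + d ≤ I) :
    (Set.range ((natAddOrderEmb m).trans (castLEOrderEmb h) : Fin d ↪o Fin I)).OrdConnected := by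
  refine ⟨?_⟩
  rintro _ ⟨p, rfl⟩ _ ⟨q, rfl⟩ z ⟨hpz, hzq⟩
  refine ⟨⟨z - m, ?_⟩, Fin.ext ?_⟩
  all_goals simp [Fin.le_def] at hpz hzq ⊢; omega

namespace GSD

variable {I : ℕ} {Z : Fin I → Fin I → Fin 2 → ℝ}

def Feasible (Qa Qb R1 R2 : Matrix (Fin I) (Fin I) ℝ) : Prop :=
  Qaᵀ * Qa = 1 ∧ Qa * Qaᵀ = 1 ∧ Qbᵀ * Qb = 1 ∧ Qb * Qbᵀ = 1 ∧
    R1.BlockTriangular id ∧ R2.BlockTriangular id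

lemma gsdObj_eq_frobSq {Qa Qb : Matrix (Fin I) (Fin I) ℝ} (hQa : Qaᵀ * Qa = 1)
    (hQb : Qbᵀ * Qb = 1) (R1 R2 : Matrix (Fin I) (Fin I) ℝ) :
    gsdObj Z Qa Qb R1 R2 =
      frobSq (Qaᵀ * sliceMat Z 0 * Qb - R1) + frobSq (Qaᵀ * sliceMat Z 1 * Qb - R2) := by
  have hslice (k : Fin 2) (R : Matrix (Fin I) (Fin I) ℝ) :
      ∑ i, ∑ j, (Z i j k - (Qa * R * Qbᵀ) i j) ^ 2 = frobSq (Qaᵀ * sliceMat Z k * Qb - R) := by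
    calc ∑ i, ∑ j, (Z i j k - (Qa * R * Qbᵀ) i j) ^ 2
        = frobSq (sliceMat Z k - Qa * R * Qbᵀ) := rfl
      _ = frobSq (Qaᵀ * (sliceMat Z k - Qa * R * Qbᵀ) * Qbᵀᵀ) := by
        rw [frobSq_mul_transpose_right (by rw [transpose_transpose]; exact mul_eq_one_comm.1 hQb),
          frobSq_mul_left (by rw [transpose_transpose]; exact mul_eq_one_comm.1 hQa)]
      _ = frobSq (Qaᵀ * sliceMat Z k * Qb - R) := by
        rw [transpose_transpose, Matrix.mul_sub, Matrix.sub_mul, Matrix.mul_assoc Qa,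
          ← Matrix.mul_assoc Qaᵀ Qa, hQa, Matrix.one_mul, Matrix.mul_assoc R, hQb, Matrix.mul_one]
  simp only [gsdObj, Fin.sum_univ_two, hslice, cons_val_zero, cons_val_one, cons_val_fin_one]

variable {Qa Qb R1 R2 : Matrix (Fin I) (Fin I) ℝ}

lemma gsdObj_eq_of_blockTriangular (hQa : Qaᵀ * Qa = 1) (hQb : Qbᵀ * Qb = 1)
    (hR1 : R1.BlockTriangular id) (hR2 : R2.BlockTriangular id) :
    gsdObj Z Qa Qb R1 R2 =
      lowerSq (Qaᵀ * sliceMat Z 0 * Qb) + lowerSq (Qaᵀ * sliceMat Z 1 * Qb) +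
        (upperSq (Qaᵀ * sliceMat Z 0 * Qb - R1) + upperSq (Qaᵀ * sliceMat Z 1 * Qb - R2)) := by
  rw [gsdObj_eq_frobSq hQa hQb, frobSq_sub_of_blockTriangular _ hR1,
    frobSq_sub_of_blockTriangular _ hR2]
  ring

section Minimizer

variable (hmin : ∀ Qa' Qb' R1' R2', Feasible Qa' Qb' R1' R2' →
  gsdObj Z Qa Qb R1 R2 ≤ gsdObj Z Qa' Qb' R1' R2')
include hmin

lemma gsdObj_le_lowerSq_add_lowerSq {Qa' Qb' : Matrix (Fin I) (Fin I) ℝ}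
    (hQa' : Qa'ᵀ * Qa' = 1) (hQb' : Qb'ᵀ * Qb' = 1) :
    gsdObj Z Qa Qb R1 R2 ≤
      lowerSq (Qa'ᵀ * sliceMat Z 0 * Qb') + lowerSq (Qa'ᵀ * sliceMat Z 1 * Qb') := by
  have h := hmin Qa' Qb' (upperPart (Qa'ᵀ * sliceMat Z 0 * Qb'))
    (upperPart (Qa'ᵀ * sliceMat Z 1 * Qb')) ⟨hQa', mul_eq_one_comm.1 hQa', hQb',
      mul_eq_one_comm.1 hQb', upperPart_blockTriangular _, upperPart_blockTriangular _⟩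
  rwa [gsdObj_eq_of_blockTriangular hQa' hQb' (upperPart_blockTriangular _)
    (upperPart_blockTriangular _), upperSq_sub_upperPart, upperSq_sub_upperPart, add_zero,
    add_zero] at h

variable (hfeas : Feasible Qa Qb R1 R2)
include hfeas

lemma diag_eq_of_isMin (i : Fin I) : (Qaᵀ * sliceMat Z 0 * Qb) i i = R1 i i := by
  have ⟨hQa, _, hQb, _, hR1, hR2⟩ := hfeas
  have h := gsdObj_le_lowerSq_add_lowerSq hmin hQa hQb
  rw [gsdObj_eq_of_blockTriangular hQa hQb hR1 hR2] at h
  have h0 : upperSq (Qaᵀ * sliceMat Z 0 * Qb - R1) = 0 := by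
    linarith [upperSq_nonneg (Qaᵀ * sliceMat Z 0 * Qb - R1),
      upperSq_nonneg (Qaᵀ * sliceMat Z 1 * Qb - R2)]
  exact sub_eq_zero.1 (upperSq_eq_zero_iff.1 h0 i i le_rfl)

lemma lowerSq_le_lowerSq_conj_of_isMin {G H : Matrix (Fin I) (Fin I) ℝ} (hG : Gᵀ * G = 1)
    (hH : Hᵀ * H = 1) :
    lowerSq (Qaᵀ * sliceMat Z 0 * Qb) + lowerSq (Qaᵀ * sliceMat Z 1 * Qb) ≤
      lowerSq (G * (Qaᵀ * sliceMat Z 0 * Qb) * Hᵀ) +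
        lowerSq (G * (Qaᵀ * sliceMat Z 1 * Qb) * Hᵀ) := by
  have ⟨hQa, _, hQb, _, hR1, hR2⟩ := hfeas
  have h := gsdObj_le_lowerSq_add_lowerSq hmin (transpose_mul_mul_transpose_eq_one hQa hG)
    (transpose_mul_mul_transpose_eq_one hQb hH)
  have hconj (k : Fin 2) :
      (Qa * Gᵀ)ᵀ * sliceMat Z k * (Qb * Hᵀ) = G * (Qaᵀ * sliceMat Z k * Qb) * Hᵀ := by
    simp only [transpose_mul, transpose_transpose, Matrix.mul_assoc]
  rw [gsdObj_eq_of_blockTriangular hQa hQb hR1 hR2, hconj, hconj] at h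
  linarith [upperSq_nonneg (Qaᵀ * sliceMat Z 0 * Qb - R1),
    upperSq_nonneg (Qaᵀ * sliceMat Z 1 * Qb - R2)]

end Minimizer

end GSD

theorem stmt13_general {I : ℕ} :
    ∀ᵐ Z ∂(volume : Measure (Fin I → Fin I → Fin 2 → ℝ)),
      tensorRank Z = I + 1 →
      ∀ Qa Qb R1 R2 : Matrix (Fin I) (Fin I) ℝ,
        Qaᵀ * Qa = 1 → Qa * Qaᵀ = 1 → Qbᵀ * Qb = 1 → Qb * Qbᵀ = 1 →
        R1.BlockTriangular id → R2.BlockTriangular id →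
        (∀ Qa' Qb' R1' R2' : Matrix (Fin I) (Fin I) ℝ,
          Qa'ᵀ * Qa' = 1 → Qa' * Qa'ᵀ = 1 → Qb'ᵀ * Qb' = 1 → Qb' * Qb'ᵀ = 1 →
          R1'.BlockTriangular id → R2'.BlockTriangular id →
          gsdObj Z Qa Qb R1 R2 ≤ gsdObj Z Qa' Qb' R1' R2') →
        IsUnit R1.det → IsUnit R2.det →
        ∀ (d h : ℕ), 2 ≤ d → 1 ≤ h → h + d ≤ I + 1 →
          ∀ W1 W2 : Matrix (Fin d) (Fin d) ℝ,
            (∀ (p q : Fin d) (hp : h - 1 + p.val < I) (hq : h - 1 + q.val < I),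
              W1 p q = (Qaᵀ * sliceMat Z 0 * Qb) ⟨h - 1 + p.val, hp⟩ ⟨h - 1 + q.val, hq⟩) →
            (∀ (p q : Fin d) (hp : h - 1 + p.val < I) (hq : h - 1 + q.val < I),
              W2 p q = (Qaᵀ * sliceMat Z 1 * Qb) ⟨h - 1 + p.val, hp⟩ ⟨h - 1 + q.val, hq⟩) →
            ∀ lam : ℝ, lam ≠ 0 →
              (∀ p q : Fin d, p ≤ q → (W2 - lam • W1) p q = 0) →
              W1.BlockTriangular id ∧ W2.BlockTriangular id := by
  refine Filter.Eventually.of_forall fun Z _ Qa Qb R1 R2 hQa hQa' hQb hQb' hR1 hR2 hopt hdet _ d h _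
    hh hhd W1 W2 hW1 hW2 lam _ hpencil => ?_
  have hfeas : GSD.Feasible Qa Qb R1 R2 := ⟨hQa, hQa', hQb, hQb', hR1, hR2⟩
  have hmin : ∀ Qa' Qb' R1' R2', GSD.Feasible Qa' Qb' R1' R2' →
      gsdObj Z Qa Qb R1 R2 ≤ gsdObj Z Qa' Qb' R1' R2' :=
    fun Qa' Qb' R1' R2' ⟨h₁, h₂, h₃, h₄, h₅, h₆⟩ => hopt Qa' Qb' R1' R2' h₁ h₂ h₃ h₄ h₅ h₆
  have hm : h - 1 + d ≤ I := by omega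
  let e : Fin d ↪o Fin I := (Fin.natAddOrderEmb (h - 1)).trans (Fin.castLEOrderEmb hm)
  have hW1e : W1 = (Qaᵀ * sliceMat Z 0 * Qb).submatrix e e := by
    ext p q; exact hW1 p q _ _
  have hW2e : W2 = (Qaᵀ * sliceMat Z 1 * Qb).submatrix e e := by
    ext p q; exact hW2 p q _ _
  refine blockTriangular_of_lowerSq_le_of_pencil (fun p => ?_) hpencil fun U V hU hV => ?_
  · rw [hW1e, submatrix_apply, GSD.diag_eq_of_isMin hmin hfeas]
    exact hR1.diag_ne_zero hdet _
  · rw [hW1e, hW2e]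
    exact lowerSq_submatrix_le_of_forall_le (Fin.ordConnected_range_natAdd_castLE hm)
      (fun G H hG hH => GSD.lowerSq_le_lowerSq_conj_of_isMin hmin hfeas hG hH) hU hV

theorem stmt13 {I : ℕ} (hI : 2 ≤ I) :
    ∀ᵐ Z ∂(volume : Measure (Fin I → Fin I → Fin 2 → ℝ)),
      tensorRank Z = I + 1 →
      ∀ Qa Qb R1 R2 : Matrix (Fin I) (Fin I) ℝ,
        Qaᵀ * Qa = 1 → Qa * Qaᵀ = 1 → Qbᵀ * Qb = 1 → Qb * Qbᵀ = 1 →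
        R1.BlockTriangular id → R2.BlockTriangular id →
        (∀ Qa' Qb' R1' R2' : Matrix (Fin I) (Fin I) ℝ,
          Qa'ᵀ * Qa' = 1 → Qa' * Qa'ᵀ = 1 → Qb'ᵀ * Qb' = 1 → Qb' * Qb'ᵀ = 1 →
          R1'.BlockTriangular id → R2'.BlockTriangular id →
          gsdObj Z Qa Qb R1 R2 ≤ gsdObj Z Qa' Qb' R1' R2') →
        IsUnit R1.det → IsUnit R2.det →
        ∀ (d h : ℕ), 2 ≤ d → 1 ≤ h → h + d ≤ I + 1 →
          ∀ W1 W2 : Matrix (Fin d) (Fin d) ℝ,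
            (∀ (p q : Fin d) (hp : h - 1 + p.val < I) (hq : h - 1 + q.val < I),
              W1 p q = (Qaᵀ * sliceMat Z 0 * Qb) ⟨h - 1 + p.val, hp⟩ ⟨h - 1 + q.val, hq⟩) →
            (∀ (p q : Fin d) (hp : h - 1 + p.val < I) (hq : h - 1 + q.val < I),
              W2 p q = (Qaᵀ * sliceMat Z 1 * Qb) ⟨h - 1 + p.val, hp⟩ ⟨h - 1 + q.val, hq⟩) →
            ∀ lam : ℝ, lam ≠ 0 →
              (∀ p q : Fin d, p ≤ q → (W2 - lam • W1) p q = 0) →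
              W1.BlockTriangular id ∧ W2.BlockTriangular id :=
  stmt13_general
end

section
/- Fix I, J and R with R ≤ min(I,J). Let Z ∈ ℝ^{I×J×2} and let (Q_a, Q_b, R₁, R₂) be an optimal solution of the GSD problem for Z. Let Q̃_a ∈ ℝ^{I×I} and Q̃_b ∈ ℝ^{J×J} be any orthonormal matrices whose first R columns are Q_a and Q_b respectively, set Z̃_k = Q̃_aᵀ·Z_k·Q̃_b and z̃_{(m,n)} = ((Z̃₁)_{mn}, (Z̃₂)_{mn}) ∈ ℝ². Then the stationarity equations hold: (a) Σ_{r=i}^{j−1} ⟨z̃_{(i,r)}, z̃_{(j,r)}⟩ = 0 for all 1 ≤ i < j ≤ R; (b) Σ_{r=i+1}^{j} ⟨z̃_{(r,i)}, z̃_{(r,j)}⟩ = 0 for all 1 ≤ i < j ≤ R; (c) Σ_{r=i}^{R} ⟨z̃_{(i,r)}, z̃_{(j,r)}⟩ = 0 for all 1 ≤ i ≤ R and R+1 ≤ j ≤ I; (d) Σ_{r=1}^{i} ⟨z̃_{(r,i)}, z̃_{(r,j)}⟩ = 0 for all 1 ≤ i ≤ R and R+1 ≤ j ≤ J. -/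
open Matrix
open scoped BigOperators

-- scalar lemma
lemma scalarKey (α β : ℝ) (h : ∀ c s : ℝ, c^2 + s^2 = 1 → 0 ≤ s^2*α + c*s*β) : β = 0 := by
  by_contra hβ
  set s : ℝ := min (1/2) (|β|/(2*(|α|+1))) with hs
  have hβpos : 0 < |β| := abs_pos.mpr hβ
  have hden : (0:ℝ) < 2*(|α|+1) := by positivity
  have hspos : 0 < s := lt_min (by norm_num) (by positivity)
  have hs12 : s ≤ 1/2 := min_le_left _ _
  have hs2 : s ≤ |β|/(2*(|α|+1)) := min_le_right _ _
  set c : ℝ := Real.sqrt (1 - s^2) with hc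
  have hs2le : s^2 ≤ 1 := by nlinarith
  have hcs : c^2 + s^2 = 1 := by
    rw [hc, Real.sq_sqrt (by nlinarith)]; ring
  have h1 := h c s hcs
  have h2 := h c (-s) (by rw [neg_pow]; simpa using hcs)
  have hcnn : 0 ≤ c := Real.sqrt_nonneg _
  have hc34 : (3/4 : ℝ) ≤ c := by nlinarith [Real.sq_sqrt (show (0:ℝ) ≤ 1 - s^2 by nlinarith)]
  -- |c*s*β| ≤ s^2 * α
  have habs : c * s * |β| ≤ s^2 * α := by
    rcases le_or_gt 0 β with hb | hb
    · rw [abs_of_nonneg hb]; nlinarith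
    · rw [abs_of_neg hb]; nlinarith
  have hsa : s * α ≤ |β|/2 := by
    have : s * (|α| + 1) ≤ |β|/2 := by
      calc s * (|α|+1) ≤ (|β|/(2*(|α|+1))) * (|α|+1) := by nlinarith
        _ = |β|/2 := by field_simp
    nlinarith [le_abs_self α]
  -- c*|β| ≤ s*α
  have : c * |β| ≤ s * α := by
    have := habs
    nlinarith
  nlinarith

def incl {n m : ℕ} (h : m ≤ n) : Matrix (Fin n) (Fin m) ℝ :=
  Matrix.of fun i r => if i = Fin.castLE h r then 1 else 0

lemma inclT_incl {n m : ℕ} (h : m ≤ n) : (incl h)ᵀ * incl h = 1 := by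
  ext r s
  simp only [Matrix.mul_apply, Matrix.transpose_apply, incl, Matrix.of_apply,
    ite_mul, one_mul, zero_mul]
  rw [Finset.sum_ite_eq' Finset.univ (Fin.castLE h r)]
  simp only [Finset.mem_univ, if_true]
  by_cases hrs : r = s
  · subst hrs; simp [Matrix.one_apply]
  · rw [if_neg, Matrix.one_apply_ne hrs]
    intro hc
    exact hrs (Fin.castLE_injective h hc)

lemma mul_incl_apply {n m : ℕ} (h : m ≤ n) (A : Matrix (Fin n) (Fin n) ℝ)
    (i : Fin n) (r : Fin m) : (A * incl h) i r = A i (Fin.castLE h r) := by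
  simp only [Matrix.mul_apply, incl, Matrix.of_apply, mul_ite, mul_one, mul_zero]
  rw [Finset.sum_ite_eq' Finset.univ (Fin.castLE h r)]
  simp

lemma incl_sandwich {nI nJ m : ℕ} (hI : m ≤ nI) (hJ : m ≤ nJ)
    (A : Matrix (Fin m) (Fin m) ℝ) (i : Fin nI) (j : Fin nJ) :
    (incl hI * A * (incl hJ)ᵀ) i j =
      if h : (i : ℕ) < m ∧ (j : ℕ) < m then A ⟨i, h.1⟩ ⟨j, h.2⟩ else 0 := by
  simp only [Matrix.mul_apply, Matrix.transpose_apply, incl, Matrix.of_apply,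
    ite_mul, one_mul, zero_mul, mul_ite, mul_one, mul_zero]
  by_cases hi : (i : ℕ) < m
  · have hirw : ∀ r : Fin m, (i = Fin.castLE hI r) ↔ (r = ⟨i, hi⟩) := by
      intro r; constructor
      · intro hh; apply Fin.ext; simp [hh]
      · intro hh; subst hh; rfl
    by_cases hj : (j : ℕ) < m
    · have hjrw : ∀ t : Fin m, (j = Fin.castLE hJ t) ↔ (t = ⟨j, hj⟩) := by
        intro t; constructor
        · intro hh; apply Fin.ext; simp [hh]
        · intro hh; subst hh; rfl
      simp only [hirw, hjrw]
      rw [dif_pos ⟨hi, hj⟩]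
      rw [Finset.sum_ite_eq' Finset.univ (⟨j, hj⟩ : Fin m)]
      simp only [Finset.mem_univ, if_true]
      rw [Finset.sum_ite_eq' Finset.univ (⟨i, hi⟩ : Fin m)]
      simp
    · have hjrw : ∀ t : Fin m, ¬ (j = Fin.castLE hJ t) := by
        intro t hh; apply hj; rw [hh]; simpa using t.isLt
      simp [hjrw, dif_neg (fun hc : _ ∧ _ => hj hc.2)]
  · have hirw : ∀ r : Fin m, ¬ (i = Fin.castLE hI r) := by
      intro r hh; apply hi; rw [hh]; simpa using r.isLt
    simp [hirw, dif_neg (fun hc : _ ∧ _ => hi hc.1)]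

-- frobenius via trace
lemma frob_eq_trace {nI nJ : ℕ} (M : Matrix (Fin nI) (Fin nJ) ℝ) :
    ∑ i, ∑ j, (M i j)^2 = (Mᵀ * M).trace := by
  simp only [Matrix.trace, Matrix.diag, Matrix.mul_apply, Matrix.transpose_apply, sq]
  exact Finset.sum_comm

lemma frob_conj {nI nJ : ℕ} (U : Matrix (Fin nI) (Fin nI) ℝ) (V : Matrix (Fin nJ) (Fin nJ) ℝ)
    (hU : U * Uᵀ = 1) (hV : V * Vᵀ = 1) (M : Matrix (Fin nI) (Fin nJ) ℝ) :
    ∑ i, ∑ j, ((Uᵀ * M * V) i j)^2 = ∑ i, ∑ j, (M i j)^2 := by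
  rw [frob_eq_trace, frob_eq_trace]
  have h1 : (Uᵀ * M * V)ᵀ * (Uᵀ * M * V) = Vᵀ * (Mᵀ * M) * V := by
    simp only [Matrix.transpose_mul, Matrix.transpose_transpose]
    calc Vᵀ * (Mᵀ * U) * (Uᵀ * M * V) = Vᵀ * (Mᵀ * (U * Uᵀ) * M) * V := by
          simp only [Matrix.mul_assoc]
      _ = Vᵀ * (Mᵀ * M) * V := by rw [hU, Matrix.mul_one]
  rw [h1, Matrix.trace_mul_comm, ← Matrix.mul_assoc, hV, Matrix.one_mul]

lemma sum_split {n : ℕ} (i j : Fin n) (hij : i ≠ j) (f : Fin n → ℝ) :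
    ∑ t, f t = f i + f j + ∑ t ∈ Finset.univ \ {i, j}, f t := by
  rw [← Finset.sum_sdiff (Finset.subset_univ {i, j}), Finset.sum_pair hij]
  ring

def givens {n : ℕ} (i j : Fin n) (c s : ℝ) : Matrix (Fin n) (Fin n) ℝ :=
  Matrix.of fun m t =>
    if m = i then (if t = i then c else if t = j then s else 0)
    else if m = j then (if t = i then -s else if t = j then c else 0)
    else if m = t then 1 else 0

lemma givens_transpose {n : ℕ} (i j : Fin n) (hij : i ≠ j) (c s : ℝ) :
    (givens i j c s)ᵀ = givens i j c (-s) := by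
  ext m t
  simp only [Matrix.transpose_apply, givens, Matrix.of_apply]
  by_cases hmi : m = i <;> by_cases hmj : m = j <;> by_cases hti : t = i <;>
    by_cases htj : t = j <;> by_cases hmt : m = t <;> simp_all [Ne.symm]

lemma transpose_givens_mul {n nJ : ℕ} (i j : Fin n) (hij : i ≠ j) (c s : ℝ)
    (M : Matrix (Fin n) (Fin nJ) ℝ) (m : Fin n) (t : Fin nJ) :
    ((givens i j c s)ᵀ * M) m t =
      if m = i then c * M i t - s * M j t
      else if m = j then s * M i t + c * M j t
      else M m t := by
  simp only [Matrix.mul_apply, Matrix.transpose_apply]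
  rw [sum_split i j hij]
  simp only [givens, Matrix.of_apply, if_pos rfl, if_neg hij, if_neg (Ne.symm hij)]
  have hrest : ∑ x ∈ Finset.univ \ {i, j}, (if x = i then (if m = i then c else if m = j then s else 0)
      else if x = j then (if m = i then -s else if m = j then c else 0)
      else if x = m then 1 else 0) * M x t
      = if m ∈ Finset.univ \ ({i, j} : Finset (Fin n)) then M m t else 0 := by
    rw [← Finset.sum_ite_eq' (Finset.univ \ {i, j}) m (fun x => M x t)]
    apply Finset.sum_congr rfl
    intro x hx
    simp only [Finset.mem_sdiff, Finset.mem_insert, Finset.mem_singleton] at hx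
    push_neg at hx
    rw [if_neg hx.2.1, if_neg hx.2.2]
    by_cases hxm : x = m <;> simp [hxm]
  rw [hrest]
  rcases eq_or_ne m i with hmi | hmi
  · simp [hmi, hij, Ne.symm hij] <;> ring
  · rcases eq_or_ne m j with hmj | hmj
    · simp [hmj, hij, Ne.symm hij, hmi] <;> ring
    · simp [hmi, hmj]

lemma mul_givens {n nI : ℕ} (i j : Fin n) (hij : i ≠ j) (c s : ℝ)
    (M : Matrix (Fin nI) (Fin n) ℝ) (m : Fin nI) (t : Fin n) :
    (M * givens i j c s) m t =
      if t = i then c * M m i - s * M m j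
      else if t = j then s * M m i + c * M m j
      else M m t := by
  simp only [Matrix.mul_apply]
  rw [sum_split i j hij]
  simp only [givens, Matrix.of_apply, if_pos rfl, if_neg hij, if_neg (Ne.symm hij)]
  have hrest : ∑ x ∈ Finset.univ \ {i, j}, M m x * (if x = i then (if t = i then c else if t = j then s else 0)
      else if x = j then (if t = i then -s else if t = j then c else 0)
      else if x = t then 1 else 0)
      = if t ∈ Finset.univ \ ({i, j} : Finset (Fin n)) then M m t else 0 := by
    rw [← Finset.sum_ite_eq' (Finset.univ \ {i, j}) t (fun x => M m x)]
    apply Finset.sum_congr rfl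
    intro x hx
    simp only [Finset.mem_sdiff, Finset.mem_insert, Finset.mem_singleton] at hx
    push_neg at hx
    rw [if_neg hx.2.1, if_neg hx.2.2]
    by_cases hxt : x = t <;> simp [hxt]
  rw [hrest]
  rcases eq_or_ne t i with hti | hti
  · simp [hti, hij, Ne.symm hij] <;> ring
  · rcases eq_or_ne t j with htj | htj
    · simp [htj, hij, Ne.symm hij, hti] <;> ring
    · simp [hti, htj]

lemma givensT_mul_givens {n : ℕ} (i j : Fin n) (hij : i ≠ j) (c s : ℝ)
    (hcs : c^2 + s^2 = 1) : (givens i j c s)ᵀ * givens i j c s = 1 := by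
  ext m t
  rw [transpose_givens_mul i j hij]
  simp only [givens, Matrix.of_apply, Matrix.one_apply, if_neg hij, if_neg (Ne.symm hij),
    if_pos rfl]
  rcases eq_or_ne m i with hmi | hmi
  · rcases eq_or_ne t i with hti | hti
    · simp [hmi, hti, hij] <;> nlinarith
    · rcases eq_or_ne t j with htj | htj
      · simp [hmi, htj, hij, Ne.symm hij, hti] <;> ring
      · have h1 : ¬ (m = t) := fun h => hti (h ▸ hmi ▸ rfl)
        simp [hmi, hti, htj, h1, Ne.symm hti]
  · rcases eq_or_ne m j with hmj | hmj
    · rcases eq_or_ne t i with hti | hti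
      · simp [hmj, hti, hij, Ne.symm hij, hmi] <;> ring
      · rcases eq_or_ne t j with htj | htj
        · simp [hmj, htj, hij, Ne.symm hij] <;> nlinarith
        · have h1 : ¬ (m = t) := fun h => htj (h ▸ hmj ▸ rfl)
          simp [hmj, hti, htj, h1, Ne.symm htj]
    · rcases eq_or_ne t i with hti | hti
      · have h1 : ¬ (m = t) := fun h => hmi (by rw [h, hti])
        simp [hmi, hmj, hti, h1, Ne.symm hmi]
      · rcases eq_or_ne t j with htj | htj
        · have h1 : ¬ (m = t) := fun h => hmj (by rw [h, htj])
          simp [hmi, hmj, hti, htj, h1, Ne.symm hmj]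
        · simp [hmi, hmj, hti, htj]

lemma givens_mul_givensT {n : ℕ} (i j : Fin n) (hij : i ≠ j) (c s : ℝ)
    (hcs : c^2 + s^2 = 1) : givens i j c s * (givens i j c s)ᵀ = 1 := by
  have h := givensT_mul_givens i j hij c (-s) (by nlinarith)
  rw [givens_transpose i j hij c (-s)] at h
  rw [givens_transpose i j hij c s]
  simpa using h

lemma sumDiff_row {I J R : ℕ} (A B : Fin 2 → Matrix (Fin I) (Fin J) ℝ)
    (i j : Fin I) (hij : i < j) (c s : ℝ) (hcs : c^2 + s^2 = 1)
    (hB : ∀ (k : Fin 2) (m : Fin I) (n : Fin J), B k m n =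
      if m = i then c * A k i n - s * A k j n
      else if m = j then s * A k i n + c * A k j n
      else A k m n) :
    (∑ k : Fin 2, ∑ m : Fin I, ∑ n : Fin J, (if (m:ℕ) ≤ (n:ℕ) ∧ (n:ℕ) < R then 0 else (B k m n)^2))
      - (∑ k : Fin 2, ∑ m : Fin I, ∑ n : Fin J, (if (m:ℕ) ≤ (n:ℕ) ∧ (n:ℕ) < R then 0 else (A k m n)^2))
    = s^2 * (∑ n ∈ Finset.univ.filter
          (fun n : Fin J => (i:ℕ) ≤ (n:ℕ) ∧ (n:ℕ) < (j:ℕ) ∧ (n:ℕ) < R),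
        ∑ k : Fin 2, ((A k i n)^2 - (A k j n)^2))
      + (c * s) * (2 * ∑ n ∈ Finset.univ.filter
          (fun n : Fin J => (i:ℕ) ≤ (n:ℕ) ∧ (n:ℕ) < (j:ℕ) ∧ (n:ℕ) < R),
        ∑ k : Fin 2, A k i n * A k j n) := by
  have hijne : i ≠ j := ne_of_lt hij
  have hv : (i:ℕ) < (j:ℕ) := hij
  have hstep : ∀ (k : Fin 2) (n : Fin J),
      (∑ m : Fin I, ((if (m:ℕ) ≤ (n:ℕ) ∧ (n:ℕ) < R then 0 else (B k m n)^2)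
        - (if (m:ℕ) ≤ (n:ℕ) ∧ (n:ℕ) < R then 0 else (A k m n)^2)))
      = (if (i:ℕ) ≤ (n:ℕ) ∧ (n:ℕ) < (j:ℕ) ∧ (n:ℕ) < R then
          s^2 * ((A k i n)^2 - (A k j n)^2) + (c*s) * (2 * (A k i n * A k j n)) else 0) := by
    intro k n
    rw [← Finset.sum_subset (Finset.subset_univ {i, j})
      (by
        intro m _ hm
        simp only [Finset.mem_insert, Finset.mem_singleton] at hm
        push_neg at hm
        rw [hB, if_neg hm.1, if_neg hm.2]
        ring)]
    rw [Finset.sum_pair hijne, hB, hB, if_pos rfl, if_neg (Ne.symm hijne), if_pos rfl]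
    by_cases hP : (i:ℕ) ≤ (n:ℕ) ∧ (n:ℕ) < R
    · by_cases hQ : (j:ℕ) ≤ (n:ℕ) ∧ (n:ℕ) < R
      · have hc3 : ¬((i:ℕ) ≤ (n:ℕ) ∧ (n:ℕ) < (j:ℕ) ∧ (n:ℕ) < R) := by omega
        simp [hP, hQ, hc3, Nat.not_lt.mpr hQ.1]
      · have hc3 : (i:ℕ) ≤ (n:ℕ) ∧ (n:ℕ) < (j:ℕ) ∧ (n:ℕ) < R := by omega
        simp only [if_pos hP, if_neg hQ, if_pos hc3]
        linear_combination ((A k j n)^2) * hcs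
    · have hQ : ¬((j:ℕ) ≤ (n:ℕ) ∧ (n:ℕ) < R) := by omega
      have hc3 : ¬((i:ℕ) ≤ (n:ℕ) ∧ (n:ℕ) < (j:ℕ) ∧ (n:ℕ) < R) := by omega
      simp only [if_neg hP, if_neg hQ, if_neg hc3]
      linear_combination ((A k i n)^2 + (A k j n)^2) * hcs
  rw [← Finset.sum_sub_distrib]
  have hk : ∀ k : Fin 2,
      (∑ m : Fin I, ∑ n : Fin J, (if (m:ℕ) ≤ (n:ℕ) ∧ (n:ℕ) < R then 0 else (B k m n)^2))
        - (∑ m : Fin I, ∑ n : Fin J, (if (m:ℕ) ≤ (n:ℕ) ∧ (n:ℕ) < R then 0 else (A k m n)^2))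
      = ∑ n ∈ Finset.univ.filter
          (fun n : Fin J => (i:ℕ) ≤ (n:ℕ) ∧ (n:ℕ) < (j:ℕ) ∧ (n:ℕ) < R),
        (s^2 * ((A k i n)^2 - (A k j n)^2) + (c*s) * (2 * (A k i n * A k j n))) := by
    intro k
    have cB : (∑ m : Fin I, ∑ n : Fin J, (if (m:ℕ) ≤ (n:ℕ) ∧ (n:ℕ) < R then 0 else (B k m n)^2))
        = ∑ n : Fin J, ∑ m : Fin I, (if (m:ℕ) ≤ (n:ℕ) ∧ (n:ℕ) < R then 0 else (B k m n)^2) :=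
      Finset.sum_comm
    have cA : (∑ m : Fin I, ∑ n : Fin J, (if (m:ℕ) ≤ (n:ℕ) ∧ (n:ℕ) < R then 0 else (A k m n)^2))
        = ∑ n : Fin J, ∑ m : Fin I, (if (m:ℕ) ≤ (n:ℕ) ∧ (n:ℕ) < R then 0 else (A k m n)^2) :=
      Finset.sum_comm
    rw [cB, cA, ← Finset.sum_sub_distrib]
    rw [Finset.sum_congr rfl (fun n _ => by rw [← Finset.sum_sub_distrib, hstep k n])]
    rw [Finset.sum_filter]
  rw [Finset.sum_congr rfl (fun k _ => hk k), Finset.sum_comm]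
  simp only [Finset.mul_sum, ← Finset.sum_add_distrib]

lemma sumDiff_col_lt {I J R : ℕ} (A B : Fin 2 → Matrix (Fin I) (Fin J) ℝ)
    (i j : Fin J) (hij : i < j) (hjR : (j:ℕ) < R) (c s : ℝ) (hcs : c^2 + s^2 = 1)
    (hB : ∀ (k : Fin 2) (m : Fin I) (t : Fin J), B k m t =
      if t = i then c * A k m i - s * A k m j
      else if t = j then s * A k m i + c * A k m j
      else A k m t) :
    (∑ k : Fin 2, ∑ m : Fin I, ∑ n : Fin J, (if (m:ℕ) ≤ (n:ℕ) ∧ (n:ℕ) < R then 0 else (B k m n)^2))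
      - (∑ k : Fin 2, ∑ m : Fin I, ∑ n : Fin J, (if (m:ℕ) ≤ (n:ℕ) ∧ (n:ℕ) < R then 0 else (A k m n)^2))
    = s^2 * (∑ m ∈ Finset.univ.filter
          (fun m : Fin I => (i:ℕ) < (m:ℕ) ∧ (m:ℕ) ≤ (j:ℕ)),
        ∑ k : Fin 2, ((A k m j)^2 - (A k m i)^2))
      + (c * s) * ((-2) * ∑ m ∈ Finset.univ.filter
          (fun m : Fin I => (i:ℕ) < (m:ℕ) ∧ (m:ℕ) ≤ (j:ℕ)),
        ∑ k : Fin 2, A k m i * A k m j) := by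
  have hijne : i ≠ j := ne_of_lt hij
  have hv : (i:ℕ) < (j:ℕ) := hij
  have hstep : ∀ (k : Fin 2) (m : Fin I),
      (∑ n : Fin J, ((if (m:ℕ) ≤ (n:ℕ) ∧ (n:ℕ) < R then 0 else (B k m n)^2)
        - (if (m:ℕ) ≤ (n:ℕ) ∧ (n:ℕ) < R then 0 else (A k m n)^2)))
      = (if (i:ℕ) < (m:ℕ) ∧ (m:ℕ) ≤ (j:ℕ) then
          s^2 * ((A k m j)^2 - (A k m i)^2) + (c*s) * ((-2) * (A k m i * A k m j)) else 0) := by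
    intro k m
    rw [← Finset.sum_subset (Finset.subset_univ {i, j})
      (by
        intro t _ ht
        simp only [Finset.mem_insert, Finset.mem_singleton] at ht
        push_neg at ht
        rw [hB, if_neg ht.1, if_neg ht.2]
        ring)]
    rw [Finset.sum_pair hijne, hB, hB, if_pos rfl, if_neg (Ne.symm hijne), if_pos rfl]
    by_cases hP : (m:ℕ) ≤ (i:ℕ) ∧ (i:ℕ) < R
    · have hQ : (m:ℕ) ≤ (j:ℕ) ∧ (j:ℕ) < R := by omega
      have hc3 : ¬((i:ℕ) < (m:ℕ) ∧ (m:ℕ) ≤ (j:ℕ)) := by omega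
      simp [hP, hQ, hc3, Nat.not_lt.mpr hP.1]
    · by_cases hQ : (m:ℕ) ≤ (j:ℕ) ∧ (j:ℕ) < R
      · have hc3 : (i:ℕ) < (m:ℕ) ∧ (m:ℕ) ≤ (j:ℕ) := by omega
        simp only [if_neg hP, if_pos hQ, if_pos hc3]
        linear_combination ((A k m i)^2) * hcs
      · have hc3 : ¬((i:ℕ) < (m:ℕ) ∧ (m:ℕ) ≤ (j:ℕ)) := by omega
        simp only [if_neg hP, if_neg hQ, if_neg hc3]
        linear_combination ((A k m i)^2 + (A k m j)^2) * hcs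
  rw [← Finset.sum_sub_distrib]
  have hk : ∀ k : Fin 2,
      (∑ m : Fin I, ∑ n : Fin J, (if (m:ℕ) ≤ (n:ℕ) ∧ (n:ℕ) < R then 0 else (B k m n)^2))
        - (∑ m : Fin I, ∑ n : Fin J, (if (m:ℕ) ≤ (n:ℕ) ∧ (n:ℕ) < R then 0 else (A k m n)^2))
      = ∑ m ∈ Finset.univ.filter
          (fun m : Fin I => (i:ℕ) < (m:ℕ) ∧ (m:ℕ) ≤ (j:ℕ)),
        (s^2 * ((A k m j)^2 - (A k m i)^2) + (c*s) * ((-2) * (A k m i * A k m j))) := by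
    intro k
    rw [← Finset.sum_sub_distrib]
    rw [Finset.sum_congr rfl (fun m _ => by rw [← Finset.sum_sub_distrib, hstep k m])]
    rw [Finset.sum_filter]
  rw [Finset.sum_congr rfl (fun k _ => hk k), Finset.sum_comm]
  simp only [Finset.mul_sum, ← Finset.sum_add_distrib]

lemma sumDiff_col_ge {I J R : ℕ} (A B : Fin 2 → Matrix (Fin I) (Fin J) ℝ)
    (i j : Fin J) (hij : i < j) (hiR : (i:ℕ) < R) (hjR : R ≤ (j:ℕ)) (c s : ℝ)
    (hcs : c^2 + s^2 = 1)
    (hB : ∀ (k : Fin 2) (m : Fin I) (t : Fin J), B k m t =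
      if t = i then c * A k m i - s * A k m j
      else if t = j then s * A k m i + c * A k m j
      else A k m t) :
    (∑ k : Fin 2, ∑ m : Fin I, ∑ n : Fin J, (if (m:ℕ) ≤ (n:ℕ) ∧ (n:ℕ) < R then 0 else (B k m n)^2))
      - (∑ k : Fin 2, ∑ m : Fin I, ∑ n : Fin J, (if (m:ℕ) ≤ (n:ℕ) ∧ (n:ℕ) < R then 0 else (A k m n)^2))
    = s^2 * (∑ m ∈ Finset.univ.filter
          (fun m : Fin I => (m:ℕ) ≤ (i:ℕ)),
        ∑ k : Fin 2, ((A k m i)^2 - (A k m j)^2))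
      + (c * s) * (2 * ∑ m ∈ Finset.univ.filter
          (fun m : Fin I => (m:ℕ) ≤ (i:ℕ)),
        ∑ k : Fin 2, A k m i * A k m j) := by
  have hijne : i ≠ j := ne_of_lt hij
  have hv : (i:ℕ) < (j:ℕ) := hij
  have hstep : ∀ (k : Fin 2) (m : Fin I),
      (∑ n : Fin J, ((if (m:ℕ) ≤ (n:ℕ) ∧ (n:ℕ) < R then 0 else (B k m n)^2)
        - (if (m:ℕ) ≤ (n:ℕ) ∧ (n:ℕ) < R then 0 else (A k m n)^2)))
      = (if (m:ℕ) ≤ (i:ℕ) then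
          s^2 * ((A k m i)^2 - (A k m j)^2) + (c*s) * (2 * (A k m i * A k m j)) else 0) := by
    intro k m
    rw [← Finset.sum_subset (Finset.subset_univ {i, j})
      (by
        intro t _ ht
        simp only [Finset.mem_insert, Finset.mem_singleton] at ht
        push_neg at ht
        rw [hB, if_neg ht.1, if_neg ht.2]
        ring)]
    rw [Finset.sum_pair hijne, hB, hB, if_pos rfl, if_neg (Ne.symm hijne), if_pos rfl]
    have hQ : ¬((m:ℕ) ≤ (j:ℕ) ∧ (j:ℕ) < R) := by omega
    by_cases hP : (m:ℕ) ≤ (i:ℕ) ∧ (i:ℕ) < R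
    · have hc3 : (m:ℕ) ≤ (i:ℕ) := hP.1
      simp only [if_pos hP, if_neg hQ, if_pos hc3]
      linear_combination ((A k m j)^2) * hcs
    · have hc3 : ¬((m:ℕ) ≤ (i:ℕ)) := by omega
      simp only [if_neg hP, if_neg hQ, if_neg hc3]
      linear_combination ((A k m i)^2 + (A k m j)^2) * hcs
  rw [← Finset.sum_sub_distrib]
  have hk : ∀ k : Fin 2,
      (∑ m : Fin I, ∑ n : Fin J, (if (m:ℕ) ≤ (n:ℕ) ∧ (n:ℕ) < R then 0 else (B k m n)^2))
        - (∑ m : Fin I, ∑ n : Fin J, (if (m:ℕ) ≤ (n:ℕ) ∧ (n:ℕ) < R then 0 else (A k m n)^2))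
      = ∑ m ∈ Finset.univ.filter
          (fun m : Fin I => (m:ℕ) ≤ (i:ℕ)),
        (s^2 * ((A k m i)^2 - (A k m j)^2) + (c*s) * (2 * (A k m i * A k m j))) := by
    intro k
    rw [← Finset.sum_sub_distrib]
    rw [Finset.sum_congr rfl (fun m _ => by rw [← Finset.sum_sub_distrib, hstep k m])]
    rw [Finset.sum_filter]
  rw [Finset.sum_congr rfl (fun k _ => hk k), Finset.sum_comm]
  simp only [Finset.mul_sum, ← Finset.sum_add_distrib]
lemma conj_residual {I J R : ℕ} (hRI : R ≤ I) (hRJ : R ≤ J)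
    (Ua : Matrix (Fin I) (Fin I) ℝ) (Ub : Matrix (Fin J) (Fin J) ℝ)
    (hUa1 : Uaᵀ * Ua = 1) (hUb1 : Ubᵀ * Ub = 1)
    (M : Matrix (Fin I) (Fin J) ℝ) (X : Matrix (Fin R) (Fin R) ℝ) :
    Uaᵀ * (M - (Ua * incl hRI) * X * (Ub * incl hRJ)ᵀ) * Ub
      = Uaᵀ * M * Ub - incl hRI * X * (incl hRJ)ᵀ := by
  have h : Uaᵀ * ((Ua * incl hRI) * X * (Ub * incl hRJ)ᵀ) * Ub
      = incl hRI * X * (incl hRJ)ᵀ := by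
    simp only [Matrix.transpose_mul, Matrix.mul_assoc]
    rw [hUb1, Matrix.mul_one, ← Matrix.mul_assoc Uaᵀ Ua, hUa1, Matrix.one_mul]
  rw [Matrix.mul_sub, Matrix.sub_mul, h]

lemma pad_apply {I J R : ℕ} (hRI : R ≤ I) (hRJ : R ≤ J)
    (W : Matrix (Fin I) (Fin J) ℝ) (m : Fin I) (n : Fin J) :
    (incl hRI * (Matrix.of fun a b : Fin R =>
        if (a:ℕ) ≤ (b:ℕ) then W (Fin.castLE hRI a) (Fin.castLE hRJ b) else 0)
      * (incl hRJ)ᵀ) m n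
      = if (m:ℕ) ≤ (n:ℕ) ∧ (n:ℕ) < R then W m n else 0 := by
  rw [incl_sandwich]
  by_cases hUT : (m:ℕ) ≤ (n:ℕ) ∧ (n:ℕ) < R
  · rw [if_pos hUT, dif_pos ⟨lt_of_le_of_lt hUT.1 hUT.2, hUT.2⟩]
    simp only [Matrix.of_apply, if_pos hUT.1]
    congr 1 <;> exact Fin.ext rfl
  · rw [if_neg hUT]
    by_cases hmn : (m:ℕ) < R ∧ (n:ℕ) < R
    · rw [dif_pos hmn]
      simp only [Matrix.of_apply]
      rw [if_neg (by omega)]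
    · rw [dif_neg hmn]

lemma gsdObj_as_matrix {I J R : ℕ} (Z : Fin I → Fin J → Fin 2 → ℝ)
    (Qa : Matrix (Fin I) (Fin R) ℝ) (Qb : Matrix (Fin J) (Fin R) ℝ)
    (R1 R2 : Matrix (Fin R) (Fin R) ℝ) :
    gsdObj Z Qa Qb R1 R2 = ∑ k : Fin 2, ∑ m : Fin I, ∑ n : Fin J,
      ((sliceMat Z k - Qa * (![R1, R2] k) * Qbᵀ) m n)^2 := by
  unfold gsdObj
  simp [sliceMat, Matrix.sub_apply]

lemma competitor_obj {I J R : ℕ} (hRI : R ≤ I) (hRJ : R ≤ J)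
    (Z : Fin I → Fin J → Fin 2 → ℝ)
    (Ua : Matrix (Fin I) (Fin I) ℝ) (Ub : Matrix (Fin J) (Fin J) ℝ)
    (hUa1 : Uaᵀ * Ua = 1) (hUa2 : Ua * Uaᵀ = 1)
    (hUb1 : Ubᵀ * Ub = 1) (hUb2 : Ub * Ubᵀ = 1)
    (W : Fin 2 → Matrix (Fin I) (Fin J) ℝ)
    (hW : ∀ k, W k = Uaᵀ * sliceMat Z k * Ub) :
    ∃ (Qa' : Matrix (Fin I) (Fin R) ℝ) (Qb' : Matrix (Fin J) (Fin R) ℝ)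
      (R1' R2' : Matrix (Fin R) (Fin R) ℝ),
      Qa'ᵀ * Qa' = 1 ∧ Qb'ᵀ * Qb' = 1 ∧ R1'.BlockTriangular id ∧ R2'.BlockTriangular id ∧
      gsdObj Z Qa' Qb' R1' R2' =
        ∑ k : Fin 2, ∑ m : Fin I, ∑ n : Fin J,
          (if (m:ℕ) ≤ (n:ℕ) ∧ (n:ℕ) < R then 0 else (W k m n)^2) := by
  set R' : Fin 2 → Matrix (Fin R) (Fin R) ℝ := fun k => Matrix.of fun a b : Fin R =>
    if (a:ℕ) ≤ (b:ℕ) then W k (Fin.castLE hRI a) (Fin.castLE hRJ b) else 0 with hR'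
  refine ⟨Ua * incl hRI, Ub * incl hRJ, R' 0, R' 1, ?_, ?_, ?_, ?_, ?_⟩
  · rw [Matrix.transpose_mul, Matrix.mul_assoc, ← Matrix.mul_assoc Uaᵀ Ua, hUa1,
      Matrix.one_mul, inclT_incl]
  · rw [Matrix.transpose_mul, Matrix.mul_assoc, ← Matrix.mul_assoc Ubᵀ Ub, hUb1,
      Matrix.one_mul, inclT_incl]
  · intro a b hab
    simp only [hR', Matrix.of_apply]
    rw [if_neg (by exact Nat.not_le.mpr hab)]
  · intro a b hab
    simp only [hR', Matrix.of_apply]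
    rw [if_neg (by exact Nat.not_le.mpr hab)]
  · rw [gsdObj_as_matrix]
    apply Finset.sum_congr rfl
    intro k _
    have hRk : ![R' 0, R' 1] k = R' k := by
      fin_cases k <;> rfl
    rw [hRk]
    rw [← frob_conj Ua Ub hUa2 hUb2]
    rw [conj_residual hRI hRJ Ua Ub hUa1 hUb1, ← hW k]
    apply Finset.sum_congr rfl
    intro m _
    apply Finset.sum_congr rfl
    intro n _
    rw [Matrix.sub_apply, hR', pad_apply hRI hRJ (W k) m n]
    by_cases hUT : (m:ℕ) ≤ (n:ℕ) ∧ (n:ℕ) < R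
    · rw [if_pos hUT, if_pos hUT, sub_self]
      norm_num
    · rw [if_neg hUT, if_neg hUT, sub_zero]

lemma lower_bound {I J R : ℕ} (hRI : R ≤ I) (hRJ : R ≤ J)
    (Z : Fin I → Fin J → Fin 2 → ℝ)
    (Qta : Matrix (Fin I) (Fin I) ℝ) (Qtb : Matrix (Fin J) (Fin J) ℝ)
    (hQta1 : Qtaᵀ * Qta = 1) (hQta2 : Qta * Qtaᵀ = 1)
    (hQtb1 : Qtbᵀ * Qtb = 1) (hQtb2 : Qtb * Qtbᵀ = 1)
    (Qa : Matrix (Fin I) (Fin R) ℝ) (Qb : Matrix (Fin J) (Fin R) ℝ)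
    (hQaeq : Qa = Qta * incl hRI) (hQbeq : Qb = Qtb * incl hRJ)
    (R1 R2 : Matrix (Fin R) (Fin R) ℝ)
    (hR1 : R1.BlockTriangular id) (hR2 : R2.BlockTriangular id)
    (Zt : Fin 2 → Matrix (Fin I) (Fin J) ℝ)
    (hZt : ∀ k, Zt k = Qtaᵀ * sliceMat Z k * Qtb) :
    (∑ k : Fin 2, ∑ m : Fin I, ∑ n : Fin J,
      (if (m:ℕ) ≤ (n:ℕ) ∧ (n:ℕ) < R then 0 else (Zt k m n)^2))
    ≤ gsdObj Z Qa Qb R1 R2 := by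
  rw [gsdObj_as_matrix]
  apply Finset.sum_le_sum
  intro k _
  have hRk : (![R1, R2] k).BlockTriangular id := by
    fin_cases k <;> assumption
  rw [← frob_conj Qta Qtb hQta2 hQtb2, hQaeq, hQbeq,
    conj_residual hRI hRJ Qta Qtb hQta1 hQtb1, ← hZt k]
  apply Finset.sum_le_sum
  intro m _
  apply Finset.sum_le_sum
  intro n _
  by_cases hUT : (m:ℕ) ≤ (n:ℕ) ∧ (n:ℕ) < R
  · rw [if_pos hUT]
    positivity
  · rw [if_neg hUT]
    have hpad : (incl hRI * ![R1, R2] k * (incl hRJ)ᵀ) m n = 0 := by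
      rw [incl_sandwich]
      by_cases hmn : (m:ℕ) < R ∧ (n:ℕ) < R
      · rw [dif_pos hmn]
        exact hRk (show id (⟨n, hmn.2⟩ : Fin R) < id ⟨m, hmn.1⟩ by
          simp only [id]
          exact Fin.mk_lt_mk.mpr (by omega))
      · rw [dif_neg hmn]
    rw [Matrix.sub_apply, hpad, sub_zero]
theorem stmt19 {I J R : ℕ} (hRI : R ≤ I) (hRJ : R ≤ J)
    (Z : Fin I → Fin J → Fin 2 → ℝ)
    (Qa : Matrix (Fin I) (Fin R) ℝ) (Qb : Matrix (Fin J) (Fin R) ℝ)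
    (R1 R2 : Matrix (Fin R) (Fin R) ℝ)
    (hQa : Qaᵀ * Qa = 1) (hQb : Qbᵀ * Qb = 1)
    (hR1 : R1.BlockTriangular id) (hR2 : R2.BlockTriangular id)
    (hopt : ∀ (Qa' : Matrix (Fin I) (Fin R) ℝ) (Qb' : Matrix (Fin J) (Fin R) ℝ)
      (R1' R2' : Matrix (Fin R) (Fin R) ℝ),
      Qa'ᵀ * Qa' = 1 → Qb'ᵀ * Qb' = 1 →
      R1'.BlockTriangular id → R2'.BlockTriangular id →
      gsdObj Z Qa Qb R1 R2 ≤ gsdObj Z Qa' Qb' R1' R2')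
    (Qta : Matrix (Fin I) (Fin I) ℝ) (Qtb : Matrix (Fin J) (Fin J) ℝ)
    (hQta1 : Qtaᵀ * Qta = 1) (hQta2 : Qta * Qtaᵀ = 1)
    (hQtb1 : Qtbᵀ * Qtb = 1) (hQtb2 : Qtb * Qtbᵀ = 1)
    (hcola : ∀ (i : Fin I) (r : Fin R), Qta i (Fin.castLE hRI r) = Qa i r)
    (hcolb : ∀ (j : Fin J) (r : Fin R), Qtb j (Fin.castLE hRJ r) = Qb j r)
    (Zt : Fin 2 → Matrix (Fin I) (Fin J) ℝ)
    (hZt : ∀ k, Zt k = Qtaᵀ * sliceMat Z k * Qtb) :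
    -- (a) row rotations with 1 ≤ i < j ≤ R
    (∀ i j : Fin I, i < j → j.val < R →
      (∑ r ∈ Finset.univ.filter (fun r : Fin J => i.val ≤ r.val ∧ r.val < j.val),
        ∑ k : Fin 2, Zt k i r * Zt k j r) = 0) ∧
    -- (b) column rotations with 1 ≤ i < j ≤ R
    (∀ i j : Fin J, i < j → j.val < R →
      (∑ r ∈ Finset.univ.filter (fun r : Fin I => i.val < r.val ∧ r.val ≤ j.val),
        ∑ k : Fin 2, Zt k r i * Zt k r j) = 0) ∧
    -- (c) row rotations with 1 ≤ i ≤ R and R+1 ≤ j ≤ I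
    (∀ i j : Fin I, i.val < R → R ≤ j.val →
      (∑ r ∈ Finset.univ.filter (fun r : Fin J => i.val ≤ r.val ∧ r.val < R),
        ∑ k : Fin 2, Zt k i r * Zt k j r) = 0) ∧
    -- (d) column rotations with 1 ≤ i ≤ R and R+1 ≤ j ≤ J
    (∀ i j : Fin J, i.val < R → R ≤ j.val →
      (∑ r ∈ Finset.univ.filter (fun r : Fin I => r.val ≤ i.val),
        ∑ k : Fin 2, Zt k r i * Zt k r j) = 0) := by
  have hQaeq : Qa = Qta * incl hRI := by
    ext i r
    rw [mul_incl_apply]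
    exact (hcola i r).symm
  have hQbeq : Qb = Qtb * incl hRJ := by
    ext j r
    rw [mul_incl_apply]
    exact (hcolb j r).symm
  have lowB := lower_bound hRI hRJ Z Qta Qtb hQta1 hQta2 hQtb1 hQtb2 Qa Qb hQaeq hQbeq
    R1 R2 hR1 hR2 Zt hZt
  -- unified row key
  have rowKey : ∀ i j : Fin I, i < j →
      (∑ n ∈ Finset.univ.filter
          (fun n : Fin J => (i:ℕ) ≤ (n:ℕ) ∧ (n:ℕ) < (j:ℕ) ∧ (n:ℕ) < R),
        ∑ k : Fin 2, Zt k i n * Zt k j n) = 0 := by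
    intro i j hij
    have h2 : (2:ℝ) * (∑ n ∈ Finset.univ.filter
          (fun n : Fin J => (i:ℕ) ≤ (n:ℕ) ∧ (n:ℕ) < (j:ℕ) ∧ (n:ℕ) < R),
        ∑ k : Fin 2, Zt k i n * Zt k j n) = 0 := by
      apply scalarKey (∑ n ∈ Finset.univ.filter
          (fun n : Fin J => (i:ℕ) ≤ (n:ℕ) ∧ (n:ℕ) < (j:ℕ) ∧ (n:ℕ) < R),
        ∑ k : Fin 2, ((Zt k i n)^2 - (Zt k j n)^2))
      intro c s hcs
      have hijne : i ≠ j := ne_of_lt hij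
      have hGT := givensT_mul_givens i j hijne c s hcs
      have hGG := givens_mul_givensT i j hijne c s hcs
      have hUa1 : (Qta * givens i j c s)ᵀ * (Qta * givens i j c s) = 1 := by
        rw [Matrix.transpose_mul, Matrix.mul_assoc, ← Matrix.mul_assoc Qtaᵀ Qta,
          hQta1, Matrix.one_mul, hGT]
      have hUa2 : (Qta * givens i j c s) * (Qta * givens i j c s)ᵀ = 1 := by
        rw [Matrix.transpose_mul, Matrix.mul_assoc, ← Matrix.mul_assoc (givens i j c s),
          hGG, Matrix.one_mul, hQta2]
      have hW : ∀ k, (givens i j c s)ᵀ * Zt k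
          = (Qta * givens i j c s)ᵀ * sliceMat Z k * Qtb := by
        intro k
        rw [hZt k]
        simp only [Matrix.transpose_mul, Matrix.mul_assoc]
      obtain ⟨Qa', Qb', R1', R2', h1, h2, h3, h4, h5⟩ :=
        competitor_obj hRI hRJ Z (Qta * givens i j c s) Qtb hUa1 hUa2 hQtb1 hQtb2
          (fun k => (givens i j c s)ᵀ * Zt k) hW
      have hineq := le_trans lowB (hopt Qa' Qb' R1' R2' h1 h2 h3 h4)
      rw [h5] at hineq
      have hBent : ∀ (k : Fin 2) (m : Fin I) (n : Fin J),
          ((givens i j c s)ᵀ * Zt k) m n =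
            if m = i then c * Zt k i n - s * Zt k j n
            else if m = j then s * Zt k i n + c * Zt k j n
            else Zt k m n := fun k m n => transpose_givens_mul i j hijne c s (Zt k) m n
      have hdiff := sumDiff_row (R := R) Zt (fun k => (givens i j c s)ᵀ * Zt k)
        i j hij c s hcs hBent
      linarith [hdiff, hineq]
    linarith
  -- unified column keys
  have colKeyLt : ∀ i j : Fin J, i < j → (j:ℕ) < R →
      (∑ m ∈ Finset.univ.filter
          (fun m : Fin I => (i:ℕ) < (m:ℕ) ∧ (m:ℕ) ≤ (j:ℕ)),
        ∑ k : Fin 2, Zt k m i * Zt k m j) = 0 := by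
    intro i j hij hjR
    have h2 : (-2:ℝ) * (∑ m ∈ Finset.univ.filter
          (fun m : Fin I => (i:ℕ) < (m:ℕ) ∧ (m:ℕ) ≤ (j:ℕ)),
        ∑ k : Fin 2, Zt k m i * Zt k m j) = 0 := by
      apply scalarKey (∑ m ∈ Finset.univ.filter
          (fun m : Fin I => (i:ℕ) < (m:ℕ) ∧ (m:ℕ) ≤ (j:ℕ)),
        ∑ k : Fin 2, ((Zt k m j)^2 - (Zt k m i)^2))
      intro c s hcs
      have hijne : i ≠ j := ne_of_lt hij
      have hGT := givensT_mul_givens i j hijne c s hcs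
      have hGG := givens_mul_givensT i j hijne c s hcs
      have hUb1 : (Qtb * givens i j c s)ᵀ * (Qtb * givens i j c s) = 1 := by
        rw [Matrix.transpose_mul, Matrix.mul_assoc, ← Matrix.mul_assoc Qtbᵀ Qtb,
          hQtb1, Matrix.one_mul, hGT]
      have hUb2 : (Qtb * givens i j c s) * (Qtb * givens i j c s)ᵀ = 1 := by
        rw [Matrix.transpose_mul, Matrix.mul_assoc, ← Matrix.mul_assoc (givens i j c s),
          hGG, Matrix.one_mul, hQtb2]
      have hW : ∀ k, Zt k * givens i j c s
          = Qtaᵀ * sliceMat Z k * (Qtb * givens i j c s) := by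
        intro k
        rw [hZt k]
        simp only [Matrix.mul_assoc]
      obtain ⟨Qa', Qb', R1', R2', h1, h2, h3, h4, h5⟩ :=
        competitor_obj hRI hRJ Z Qta (Qtb * givens i j c s) hQta1 hQta2 hUb1 hUb2
          (fun k => Zt k * givens i j c s) hW
      have hineq := le_trans lowB (hopt Qa' Qb' R1' R2' h1 h2 h3 h4)
      rw [h5] at hineq
      have hBent : ∀ (k : Fin 2) (m : Fin I) (t : Fin J),
          (Zt k * givens i j c s) m t =
            if t = i then c * Zt k m i - s * Zt k m j
            else if t = j then s * Zt k m i + c * Zt k m j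
            else Zt k m t := fun k m t => mul_givens i j hijne c s (Zt k) m t
      have hdiff := sumDiff_col_lt Zt (fun k => Zt k * givens i j c s)
        i j hij hjR c s hcs hBent
      linarith [hdiff, hineq]
    linarith
  have colKeyGe : ∀ i j : Fin J, i < j → (i:ℕ) < R → R ≤ (j:ℕ) →
      (∑ m ∈ Finset.univ.filter (fun m : Fin I => (m:ℕ) ≤ (i:ℕ)),
        ∑ k : Fin 2, Zt k m i * Zt k m j) = 0 := by
    intro i j hij hiR hjR
    have h2 : (2:ℝ) * (∑ m ∈ Finset.univ.filter (fun m : Fin I => (m:ℕ) ≤ (i:ℕ)),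
        ∑ k : Fin 2, Zt k m i * Zt k m j) = 0 := by
      apply scalarKey (∑ m ∈ Finset.univ.filter (fun m : Fin I => (m:ℕ) ≤ (i:ℕ)),
        ∑ k : Fin 2, ((Zt k m i)^2 - (Zt k m j)^2))
      intro c s hcs
      have hijne : i ≠ j := ne_of_lt hij
      have hGT := givensT_mul_givens i j hijne c s hcs
      have hGG := givens_mul_givensT i j hijne c s hcs
      have hUb1 : (Qtb * givens i j c s)ᵀ * (Qtb * givens i j c s) = 1 := by
        rw [Matrix.transpose_mul, Matrix.mul_assoc, ← Matrix.mul_assoc Qtbᵀ Qtb,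
          hQtb1, Matrix.one_mul, hGT]
      have hUb2 : (Qtb * givens i j c s) * (Qtb * givens i j c s)ᵀ = 1 := by
        rw [Matrix.transpose_mul, Matrix.mul_assoc, ← Matrix.mul_assoc (givens i j c s),
          hGG, Matrix.one_mul, hQtb2]
      have hW : ∀ k, Zt k * givens i j c s
          = Qtaᵀ * sliceMat Z k * (Qtb * givens i j c s) := by
        intro k
        rw [hZt k]
        simp only [Matrix.mul_assoc]
      obtain ⟨Qa', Qb', R1', R2', h1, h2, h3, h4, h5⟩ :=
        competitor_obj hRI hRJ Z Qta (Qtb * givens i j c s) hQta1 hQta2 hUb1 hUb2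
          (fun k => Zt k * givens i j c s) hW
      have hineq := le_trans lowB (hopt Qa' Qb' R1' R2' h1 h2 h3 h4)
      rw [h5] at hineq
      have hBent : ∀ (k : Fin 2) (m : Fin I) (t : Fin J),
          (Zt k * givens i j c s) m t =
            if t = i then c * Zt k m i - s * Zt k m j
            else if t = j then s * Zt k m i + c * Zt k m j
            else Zt k m t := fun k m t => mul_givens i j hijne c s (Zt k) m t
      have hdiff := sumDiff_col_ge Zt (fun k => Zt k * givens i j c s)
        i j hij hiR hjR c s hcs hBent
      linarith [hdiff, hineq]
    linarith
  refine ⟨?_, ?_, ?_, ?_⟩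
  · intro i j hij hjR
    have hfil : Finset.univ.filter
        (fun n : Fin J => (i:ℕ) ≤ (n:ℕ) ∧ (n:ℕ) < (j:ℕ) ∧ (n:ℕ) < R)
        = Finset.univ.filter (fun r : Fin J => i.val ≤ r.val ∧ r.val < j.val) := by
      apply Finset.filter_congr
      intro n _
      constructor
      · intro h; exact ⟨h.1, h.2.1⟩
      · intro h; exact ⟨h.1, h.2, by omega⟩
    have := rowKey i j hij
    rwa [hfil] at this
  · intro i j hij hjR
    exact colKeyLt i j hij hjR
  · intro i j hiR hjR
    have hij : i < j := by
      rw [Fin.lt_def]; omega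
    have hfil : Finset.univ.filter
        (fun n : Fin J => (i:ℕ) ≤ (n:ℕ) ∧ (n:ℕ) < (j:ℕ) ∧ (n:ℕ) < R)
        = Finset.univ.filter (fun r : Fin J => i.val ≤ r.val ∧ r.val < R) := by
      apply Finset.filter_congr
      intro n _
      constructor
      · intro h; exact ⟨h.1, h.2.2⟩
      · intro h; exact ⟨h.1, by omega, h.2⟩
    have := rowKey i j hij
    rwa [hfil] at this
  · intro i j hiR hjR
    have hij : i < j := by
      rw [Fin.lt_def]; omega
    exact colKeyGe i j hij hiR hjR
end
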